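/- arXiv:2309.04909 — 16 statements merged into one kernel-verified Lean document; each statement's English description precedes it below -/
import Mathlib

section
/- For all natural numbers ℓ, k with k ≤ ℓ and all natural numbers α, β with α < 2^ℓ and β < 2^ℓ, there exists bit ∈ {0,1} such that, as an equality of integers, ⌊((α+β) mod 2^ℓ)/2^k⌋ = ⌊α/2^k⌋ + ⌊β/2^k⌋ − LT((α+β) mod 2^ℓ, α)·2^{ℓ−k} + bit. -/
/-!
Write `s = (α + β) mod 2^ℓ`. Since `α, β < 2^ℓ` the sum wraps around at most once, and it wraps
exactly when `s < α`; so `α + β = s + w·2^ℓ` with `w = LT(s, α)`. Cutting `k ≤ ℓ` bits commutes with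
adding a multiple of `2^ℓ`, giving `cut(α + β, k) = cut(s, k) + w·2^(ℓ-k)`, while cutting a sum
loses at most the carry out of the low `k` bits: `cut(α + β, k) = cut(α, k) + cut(β, k) + bit`.
-/

namespace Nat

theorem exists_add_div_eq_add_div_add_le_one {n : ℕ} (hn : 0 < n) (a b : ℕ) :
    ∃ c ≤ 1, (a + b) / n = a / n + b / n + c :=
  ⟨if n ≤ a % n + b % n then 1 else 0, by split <;> simp, Nat.add_div hn⟩

theorem add_mod_add_ite_lt_mul {a b m : ℕ} (ha : a < m) (hb : b < m) :
    (a + b) % m + (if (a + b) % m < a then 1 else 0) * m = a + b := by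
  by_cases h : a + b < m
  · rw [Nat.mod_eq_of_lt h, if_neg (by omega)]
    simp
  · have hwrap : (a + b) % m = a + b - m := by
      rw [Nat.mod_eq_sub_mod (by omega), Nat.mod_eq_of_lt (by omega)]
    rw [hwrap, if_pos (by omega)]
    omega

theorem add_mul_pow_div_pow {p k ℓ : ℕ} (hp : 0 < p) (hk : k ≤ ℓ) (a w : ℕ) :
    (a + w * p ^ ℓ) / p ^ k = a / p ^ k + w * p ^ (ℓ - k) := by
  rw [← Nat.add_sub_cancel' hk, pow_add, Nat.add_sub_cancel_left, mul_left_comm,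
    Nat.add_mul_div_left _ _ (pow_pos hp k)]

end Nat

/-- cut of a modular sum decomposes into cuts plus a wrap term and a carry bit. -/
theorem stmt_0 (ℓ k : ℕ) (hk : k ≤ ℓ) (α β : ℕ) (hα : α < 2 ^ ℓ) (hβ : β < 2 ^ ℓ) :
    ∃ bit : ℕ, bit ≤ 1 ∧
      (((α + β) % 2 ^ ℓ / 2 ^ k : ℕ) : ℤ) =
        ((α / 2 ^ k : ℕ) : ℤ) + ((β / 2 ^ k : ℕ) : ℤ)
          - (if (α + β) % 2 ^ ℓ < α then (1 : ℤ) else 0) * 2 ^ (ℓ - k) + (bit : ℤ) := by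
  obtain ⟨bit, hbit, hcarry⟩ :=
    Nat.exists_add_div_eq_add_div_add_le_one (pow_pos two_pos k) α β
  refine ⟨bit, hbit, ?_⟩
  have hcut := Nat.add_mul_pow_div_pow two_pos hk ((α + β) % 2 ^ ℓ)
    (if (α + β) % 2 ^ ℓ < α then 1 else 0)
  rw [Nat.add_mod_add_ite_lt_mul hα hβ, hcarry] at hcut
  split_ifs at hcut ⊢ <;> push_cast at hcut ⊢ <;> linarith
end

section
/- For all natural numbers ℓ, k with k ≤ ℓ and all natural numbers α, β with α < 2^ℓ and β < 2^ℓ, there exists bit ∈ {0,1} such that, as an equality of integers, ⌊((α + 2^ℓ − β) mod 2^ℓ)/2^k⌋ = ⌊α/2^k⌋ − ⌊β/2^k⌋ + LT(α, (α + 2^ℓ − β) mod 2^ℓ)·2^{ℓ−k} − bit, where (α + 2^ℓ − β) mod 2^ℓ represents the difference α − β in Z_{2^ℓ}. -/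
/-- cut of a modular difference decomposes into cuts minus a borrow bit
plus a wrap term. -/
theorem stmt_1 (ℓ k : ℕ) (hk : k ≤ ℓ) (α β : ℕ) (hα : α < 2 ^ ℓ) (hβ : β < 2 ^ ℓ) :
    ∃ bit : ℕ, bit ≤ 1 ∧
      (((α + 2 ^ ℓ - β) % 2 ^ ℓ / 2 ^ k : ℕ) : ℤ) =
        ((α / 2 ^ k : ℕ) : ℤ) - ((β / 2 ^ k : ℕ) : ℤ)
          + (if α < (α + 2 ^ ℓ - β) % 2 ^ ℓ then (1 : ℤ) else 0) * 2 ^ (ℓ - k)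
          - (bit : ℤ) := by
  have hq : 0 < 2 ^ k := Nat.pow_pos (by norm_num)
  have hLq : 2 ^ ℓ / 2 ^ k = 2 ^ (ℓ - k) := Nat.pow_div hk (by norm_num)
  have hdvd : 2 ^ k ∣ 2 ^ ℓ := pow_dvd_pow 2 hk
  by_cases hba : β ≤ α
  · -- no wrap
    have hδ : (α + 2 ^ ℓ - β) % 2 ^ ℓ = α - β := by
      have : α + 2 ^ ℓ - β = (α - β) + 2 ^ ℓ := by omega
      rw [this, Nat.add_mod_right, Nat.mod_eq_of_lt (by omega)]
    rw [hδ]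
    have hif : ¬ α < α - β := by omega
    rw [if_neg hif]
    have key := Nat.add_div (a := α - β) (b := β) hq
    rw [Nat.sub_add_cancel hba] at key
    refine ⟨if 2 ^ k ≤ (α - β) % 2 ^ k + β % 2 ^ k then 1 else 0, ?_, ?_⟩
    · split <;> norm_num
    · split at key <;> split <;> omega
  · -- wrap
    have hδ : (α + 2 ^ ℓ - β) % 2 ^ ℓ = α + 2 ^ ℓ - β := by
      apply Nat.mod_eq_of_lt; omega
    rw [hδ]
    have hif : α < α + 2 ^ ℓ - β := by omega
    rw [if_pos hif]
    have key := Nat.add_div (a := α + 2 ^ ℓ - β) (b := β) hq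
    rw [Nat.sub_add_cancel (by omega)] at key
    have hL0 : 2 ^ ℓ % 2 ^ k = 0 := Nat.mod_eq_zero_of_dvd hdvd
    have key2 := Nat.add_div (a := α) (b := 2 ^ ℓ) hq
    rw [hL0, hLq] at key2
    have hr : α % 2 ^ k < 2 ^ k := Nat.mod_lt _ hq
    rw [if_neg (by omega)] at key2
    rw [key2] at key
    have hp : ((2 ^ (ℓ - k) : ℕ) : ℤ) = 2 ^ (ℓ - k) := by push_cast; ring
    refine ⟨if 2 ^ k ≤ (α + 2 ^ ℓ - β) % 2 ^ k + β % 2 ^ k then 1 else 0, ?_, ?_⟩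
    · split <;> norm_num
    · split at key <;> split <;> omega
end

section
/- For all natural numbers ℓ, k with k ≤ ℓ and all natural numbers α, β with α < 2^ℓ and β < 2^ℓ: (i) if (α+β) mod 2^ℓ < α, then there exists bit ∈ {0,1} such that, as integers, ⌊((α+β) mod 2^ℓ)/2^k⌋ = ⌊α/2^k⌋ + ⌊β/2^k⌋ + bit − 2^{ℓ−k}; (ii) if (α + 2^ℓ − β) mod 2^ℓ > α, then there exists bit ∈ {0,1} such that, as integers, ⌊((α + 2^ℓ − β) mod 2^ℓ)/2^k⌋ = ⌊α/2^k⌋ − ⌊β/2^k⌋ − bit + 2^{ℓ−k}. -/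
/-- cut of sums/differences with modular wrap-around. -/
theorem stmt_4 (ℓ k : ℕ) (hk : k ≤ ℓ) (α β : ℕ) (hα : α < 2 ^ ℓ) (hβ : β < 2 ^ ℓ) :
    ((α + β) % 2 ^ ℓ < α →
      ∃ bit : ℕ, bit ≤ 1 ∧
        (((α + β) % 2 ^ ℓ / 2 ^ k : ℕ) : ℤ) =
          ((α / 2 ^ k : ℕ) : ℤ) + ((β / 2 ^ k : ℕ) : ℤ) + (bit : ℤ) - 2 ^ (ℓ - k)) ∧
    (α < (α + 2 ^ ℓ - β) % 2 ^ ℓ →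
      ∃ bit : ℕ, bit ≤ 1 ∧
        (((α + 2 ^ ℓ - β) % 2 ^ ℓ / 2 ^ k : ℕ) : ℤ) =
          ((α / 2 ^ k : ℕ) : ℤ) - ((β / 2 ^ k : ℕ) : ℤ) - (bit : ℤ) + 2 ^ (ℓ - k)) := by
  have h2k : 0 < 2 ^ k := Nat.two_pow_pos k
  have hpow : 2 ^ k * 2 ^ (ℓ - k) = 2 ^ ℓ := by
    rw [← pow_add, Nat.add_sub_cancel' hk]
  have hrα : α % 2 ^ k < 2 ^ k := Nat.mod_lt _ h2k
  have hrβ : β % 2 ^ k < 2 ^ k := Nat.mod_lt _ h2k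
  have hdα := Nat.div_add_mod α (2 ^ k)
  have hdβ := Nat.div_add_mod β (2 ^ k)
  have hbQ : β / 2 ^ k < 2 ^ (ℓ - k) := by
    rw [Nat.div_lt_iff_lt_mul h2k, Nat.mul_comm, hpow]; exact hβ
  have hcast : ((2 : ℤ) ^ (ℓ - k)) = ((2 ^ (ℓ - k) : ℕ) : ℤ) := by push_cast; ring
  constructor
  · intro h
    have hge : 2 ^ ℓ ≤ α + β := by
      by_contra hlt
      push_neg at hlt
      rw [Nat.mod_eq_of_lt hlt] at h
      omega
    have hmod : (α + β) % 2 ^ ℓ = α + β - 2 ^ ℓ := by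
      rw [Nat.mod_eq_sub_mod hge, Nat.mod_eq_of_lt (by omega)]
    refine ⟨(α % 2 ^ k + β % 2 ^ k) / 2 ^ k, ?_, ?_⟩
    · have : (α % 2 ^ k + β % 2 ^ k) / 2 ^ k < 2 :=
        (Nat.div_lt_iff_lt_mul h2k).mpr (by omega)
      omega
    · have key : (α + β) / 2 ^ k
          = α / 2 ^ k + β / 2 ^ k + (α % 2 ^ k + β % 2 ^ k) / 2 ^ k := by
        conv_lhs => rw [← hdα, ← hdβ]
        rw [show 2 ^ k * (α / 2 ^ k) + α % 2 ^ k + (2 ^ k * (β / 2 ^ k) + β % 2 ^ k)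
            = 2 ^ k * (α / 2 ^ k + β / 2 ^ k) + (α % 2 ^ k + β % 2 ^ k) by ring,
          Nat.mul_add_div h2k]
      have key2 : (α + β - 2 ^ ℓ) / 2 ^ k = (α + β) / 2 ^ k - 2 ^ (ℓ - k) := by
        rw [← hpow, Nat.sub_mul_div]
      have hle : 2 ^ (ℓ - k) ≤ (α + β) / 2 ^ k := by
        calc 2 ^ (ℓ - k) = 2 ^ ℓ / 2 ^ k := (Nat.pow_div hk (by norm_num)).symm
          _ ≤ (α + β) / 2 ^ k := Nat.div_le_div_right hge
      rw [hmod, key2]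
      rw [key] at hle ⊢
      push_cast [Nat.cast_sub hle]
      ring
  · intro h
    have hab : α < β := by
      by_contra hba
      push_neg at hba
      have e : α + 2 ^ ℓ - β = 2 ^ ℓ + (α - β) := by omega
      rw [e, Nat.add_mod_left, Nat.mod_eq_of_lt (by omega)] at h
      omega
    have hN : (α + 2 ^ ℓ - β) % 2 ^ ℓ = α + 2 ^ ℓ - β := Nat.mod_eq_of_lt (by omega)
    rw [hN]
    by_cases hrs : β % 2 ^ k ≤ α % 2 ^ k
    · -- no borrow, bit = 0
      obtain ⟨c, hcc⟩ : ∃ c, β / 2 ^ k + c = α / 2 ^ k + 2 ^ (ℓ - k) :=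
        ⟨α / 2 ^ k + 2 ^ (ℓ - k) - β / 2 ^ k,
          Nat.add_sub_cancel' (le_trans hbQ.le (Nat.le_add_left _ _))⟩
      have hm : 2 ^ k * (β / 2 ^ k) + 2 ^ k * c
          = 2 ^ k * (α / 2 ^ k) + 2 ^ k * 2 ^ (ℓ - k) := by
        rw [← Nat.mul_add, ← Nat.mul_add, hcc]
      have hNe : α + 2 ^ ℓ - β = 2 ^ k * c + (α % 2 ^ k - β % 2 ^ k) := by omega
      have hdiv : (α + 2 ^ ℓ - β) / 2 ^ k = c := by
        rw [hNe, Nat.mul_add_div h2k, Nat.div_eq_of_lt (by omega)]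
        rfl
      refine ⟨0, by norm_num, ?_⟩
      rw [hdiv, hcast]
      omega
    · -- borrow, bit = 1
      push_neg at hrs
      obtain ⟨c, hcc⟩ : ∃ c, β / 2 ^ k + 1 + c = α / 2 ^ k + 2 ^ (ℓ - k) :=
        ⟨α / 2 ^ k + 2 ^ (ℓ - k) - (β / 2 ^ k + 1),
          Nat.add_sub_cancel' (le_trans hbQ (Nat.le_add_left _ _))⟩
      have hm : 2 ^ k * (β / 2 ^ k + 1) + 2 ^ k * c
          = 2 ^ k * (α / 2 ^ k) + 2 ^ k * 2 ^ (ℓ - k) := by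
        rw [← Nat.mul_add, ← Nat.mul_add, hcc]
      have hm' : 2 ^ k * (β / 2 ^ k + 1) = 2 ^ k * (β / 2 ^ k) + 2 ^ k := by ring
      have hNe : α + 2 ^ ℓ - β = 2 ^ k * c + (2 ^ k + α % 2 ^ k - β % 2 ^ k) := by omega
      have hdiv : (α + 2 ^ ℓ - β) / 2 ^ k = c := by
        rw [hNe, Nat.mul_add_div h2k, Nat.div_eq_of_lt (by omega)]
        rfl
      refine ⟨1, le_refl 1, ?_⟩
      rw [hdiv, hcast]
      omega
end

section
/- Let ℓ, ℓ_x, k be naturals with k ≤ ℓ and ℓ > ℓ_x + 1, let x be a natural with 0 ≤ x < 2^{ℓ_x} (a positive input), and let R be a natural with 0 < R < 2^ℓ. Define out := (⌊((x+R) mod 2^ℓ)/2^k⌋ + 2^ℓ − ⌊R/2^k⌋) mod 2^ℓ. Then there exists bit ∈ {0,1} such that out ≡ ⌊x/2^k⌋ − LT((x+R) mod 2^ℓ, x)·2^{ℓ−k} + bit (mod 2^ℓ), as a congruence of integers. -/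
/-!
Write `s = (x + R) mod 2^ℓ`. Since `x, R < 2^ℓ`, the sum `x + R` exceeds `s` by exactly one copy of
`2^ℓ` when it overflows, i.e. when `s < x`, and by nothing otherwise; dividing by `2^k` turns that
copy into `2^(ℓ-k)`. On the other hand `⌊(x + R)/2^k⌋` differs from `⌊x/2^k⌋ + ⌊R/2^k⌋` by a carry
bit. Comparing the two expressions for `⌊(x + R)/2^k⌋` gives the claimed value of
`⌊s/2^k⌋ - ⌊R/2^k⌋`, which is `out` modulo `2^ℓ`.
-/

theorem Nat.exists_add_div_eq_add_div_add_carry (a b K : ℕ) (hK : 0 < K) :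
    ∃ c ≤ 1, (a + b) / K = a / K + b / K + c :=
  ⟨_, by split <;> simp, Nat.add_div hK⟩

theorem Nat.add_eq_mod_add_overflow_mul {x R N : ℕ} (hx : x < N) (hR : R < N) :
    x + R = (x + R) % N + (if (x + R) % N < x then 1 else 0) * N := by
  by_cases hlt : x + R < N
  · rw [Nat.mod_eq_of_lt hlt, if_neg (by omega)]
    simp
  · have hmod : (x + R) % N = x + R - N := by
      rw [Nat.mod_eq_sub_mod (by omega), Nat.mod_eq_of_lt (by omega)]
    rw [hmod, if_pos (by omega)]
    omega

theorem Int.natCast_mod_add_sub_modEq {A B N : ℕ} (hB : B ≤ N) :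
    (((A + N - B) % N : ℕ) : ℤ) ≡ A - B [ZMOD N] := by
  refine (Int.natCast_modEq_iff.mpr (Nat.mod_modEq _ N)).trans ?_
  rw [Nat.cast_sub (by omega)]
  push_cast
  exact Int.modEq_iff_dvd.mpr ⟨-1, by ring⟩

theorem stmt_5_general (ℓ ℓx k : ℕ) (hk : k ≤ ℓ) (hℓ : ℓ > ℓx + 1) (x : ℕ) (hx : x < 2 ^ ℓx)
    (R : ℕ) (hR : R < 2 ^ ℓ) :
    ∃ bit : ℕ, bit ≤ 1 ∧
      Int.ModEq (2 ^ ℓ)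
        ((((x + R) % 2 ^ ℓ / 2 ^ k + 2 ^ ℓ - R / 2 ^ k) % 2 ^ ℓ : ℕ) : ℤ)
        (((x / 2 ^ k : ℕ) : ℤ)
          - (if (x + R) % 2 ^ ℓ < x then (1 : ℤ) else 0) * 2 ^ (ℓ - k) + (bit : ℤ)) := by
  have hxN : x < 2 ^ ℓ := hx.trans_le (Nat.pow_le_pow_right two_pos (by omega))
  obtain ⟨b, hb, hcarry⟩ := Nat.exists_add_div_eq_add_div_add_carry x R (2 ^ k) (by positivity)
  have hoverflow : (x + R) / 2 ^ k = (x + R) % 2 ^ ℓ / 2 ^ k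
      + (if (x + R) % 2 ^ ℓ < x then 1 else 0) * 2 ^ (ℓ - k) := by
    conv_lhs => rw [Nat.add_eq_mod_add_overflow_mul hxN hR]
    rw [← Nat.pow_sub_mul_pow 2 hk, ← mul_assoc, Nat.add_mul_div_right _ _ (by positivity)]
  have hRN : R / 2 ^ k ≤ 2 ^ ℓ := (Nat.div_le_self _ _).trans hR.le
  have hdiff : (((x + R) % 2 ^ ℓ / 2 ^ k : ℕ) : ℤ) - (R / 2 ^ k : ℕ)
      = (x / 2 ^ k : ℕ) - (if (x + R) % 2 ^ ℓ < x then (1 : ℤ) else 0) * 2 ^ (ℓ - k) + b := by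
    have h := congrArg (Nat.cast : ℕ → ℤ) (hcarry ▸ hoverflow)
    simp only [Nat.cast_add, Nat.cast_mul, Nat.cast_pow, Nat.cast_ite, Nat.cast_ofNat,
      Nat.cast_one, Nat.cast_zero] at h
    linear_combination -h
  exact ⟨b, hb, (Int.natCast_mod_add_sub_modEq hRN).trans (hdiff ▸ .refl _)⟩

/-- SecureML probabilistic truncation of a positive input. -/
theorem stmt_5 (ℓ ℓx k : ℕ) (hk : k ≤ ℓ) (hℓ : ℓ > ℓx + 1) (x : ℕ) (hx : x < 2 ^ ℓx)
    (R : ℕ) (hR0 : 0 < R) (hR : R < 2 ^ ℓ) :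
    ∃ bit : ℕ, bit ≤ 1 ∧
      Int.ModEq (2 ^ ℓ)
        ((((x + R) % 2 ^ ℓ / 2 ^ k + 2 ^ ℓ - R / 2 ^ k) % 2 ^ ℓ : ℕ) : ℤ)
        (((x / 2 ^ k : ℕ) : ℤ)
          - (if (x + R) % 2 ^ ℓ < x then (1 : ℤ) else 0) * 2 ^ (ℓ - k) + (bit : ℤ)) :=
  stmt_5_general ℓ ℓx k hk hℓ x hx R hR
end

section
/- Let ℓ, ℓ_x, k be naturals with k ≤ ℓ and ℓ > ℓ_x + 1, let x be a natural with 2^ℓ − 2^{ℓ_x} < x < 2^ℓ (a negative input) with absolute value ξ := 2^ℓ − x, and let R be a natural with 0 < R < 2^ℓ. Define out := (⌊((x+R) mod 2^ℓ)/2^k⌋ + 2^ℓ − ⌊R/2^k⌋) mod 2^ℓ. Then there exists bit ∈ {0,1} such that out ≡ −⌊ξ/2^k⌋ + LT(x, (x+R) mod 2^ℓ)·2^{ℓ−k} − bit (mod 2^ℓ), as a congruence of integers. -/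
lemma final_helper (ℓ : ℕ) (q r s bit : ℕ) (D : ℤ) (hr : r ≤ 2 ^ ℓ)
    (hkey : (q : ℤ) + s + bit = D + r) :
    Int.ModEq (2 ^ ℓ) (((q + 2 ^ ℓ - r) % 2 ^ ℓ : ℕ) : ℤ) (-(s : ℤ) + D - bit) := by
  have h1 : (((q + 2 ^ ℓ - r) % 2 ^ ℓ : ℕ) : ℤ) = ((q : ℤ) + 2 ^ ℓ - r) % 2 ^ ℓ := by
    push_cast [Nat.cast_sub (show r ≤ q + 2 ^ ℓ by omega)]
    rfl
  rw [h1]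
  exact (Int.emod_emod_of_dvd _ dvd_rfl).trans
    (Int.modEq_iff_dvd.mpr ⟨-1, by linarith [hkey]⟩)

/-- SecureML probabilistic truncation of a negative input. -/
theorem stmt_6 (ℓ ℓx k : ℕ) (hk : k ≤ ℓ) (hℓ : ℓ > ℓx + 1) (x : ℕ)
    (hx1 : 2 ^ ℓ - 2 ^ ℓx < x) (hx2 : x < 2 ^ ℓ)
    (R : ℕ) (hR0 : 0 < R) (hR : R < 2 ^ ℓ) :
    ∃ bit : ℕ, bit ≤ 1 ∧
      Int.ModEq (2 ^ ℓ)
        ((((x + R) % 2 ^ ℓ / 2 ^ k + 2 ^ ℓ - R / 2 ^ k) % 2 ^ ℓ : ℕ) : ℤ)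
        (-(((2 ^ ℓ - x) / 2 ^ k : ℕ) : ℤ)
          + (if x < (x + R) % 2 ^ ℓ then (1 : ℤ) else 0) * 2 ^ (ℓ - k) - (bit : ℤ)) := by
  have hK : 0 < 2 ^ k := pow_pos (by norm_num) k
  have hLKM : (2 : ℕ) ^ ℓ = 2 ^ k * 2 ^ (ℓ - k) := by
    rw [← pow_add]; congr 1; omega
  have hr : R / 2 ^ k ≤ 2 ^ ℓ := le_trans (Nat.div_le_self _ _) (le_of_lt hR)
  by_cases h : x + R < 2 ^ ℓ
  · -- no wraparound
    have hmod : (x + R) % 2 ^ ℓ = x + R := Nat.mod_eq_of_lt h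
    have hsum : (x + R) + (2 ^ ℓ - x) = 2 ^ k * 2 ^ (ℓ - k) + R := by
      rw [← hLKM]; omega
    have hdiv := Nat.add_div (a := x + R) (b := 2 ^ ℓ - x) hK
    rw [hsum, Nat.mul_add_div hK] at hdiv
    set q := (x + R) / 2 ^ k with hq
    set r := R / 2 ^ k with hrr
    set s := (2 ^ ℓ - x) / 2 ^ k with hs
    have hle : q + s ≤ 2 ^ (ℓ - k) + r := by split_ifs at hdiv <;> omega
    refine ⟨2 ^ (ℓ - k) + r - (q + s), by split_ifs at hdiv <;> omega, ?_⟩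
    rw [hmod, if_pos (show x < x + R by omega)]
    exact final_helper ℓ q r s _ (1 * 2 ^ (ℓ - k)) hr
      (by push_cast [Nat.cast_sub hle]; ring)
  · -- wraparound
    have hmod : (x + R) % 2 ^ ℓ = x + R - 2 ^ ℓ := by
      rw [Nat.mod_eq_sub_mod (by omega)]
      exact Nat.mod_eq_of_lt (by omega)
    have hsum : (x + R - 2 ^ ℓ) + (2 ^ ℓ - x) = R := by omega
    have hdiv := Nat.add_div (a := x + R - 2 ^ ℓ) (b := 2 ^ ℓ - x) hK
    rw [hsum] at hdiv
    set q := (x + R - 2 ^ ℓ) / 2 ^ k with hq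
    set r := R / 2 ^ k with hrr
    set s := (2 ^ ℓ - x) / 2 ^ k with hs
    have hle : q + s ≤ r := by split_ifs at hdiv <;> omega
    refine ⟨r - (q + s), by split_ifs at hdiv <;> omega, ?_⟩
    rw [hmod, if_neg (show ¬ x < x + R - 2 ^ ℓ by omega)]
    exact final_helper ℓ q r s _ (0 * 2 ^ (ℓ - k)) hr
      (by push_cast [Nat.cast_sub hle]; ring)
end

section
/- For all natural numbers ℓ, k_1, k_2 with k_1 + k_2 ≤ ℓ and all naturals α, β with α < 2^ℓ and β < 2^ℓ, there exists bit ∈ {0,1} such that ⌊((α+β) mod 2^ℓ)/2^{k_1}⌋ ≡ ⌊α/2^{k_1}⌋ + ⌊β/2^{k_1}⌋ + bit (mod 2^{ℓ−k_1−k_2}), as a congruence of integers. -/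
/-- two-parameter cut of a modular sum, as a congruence
modulo 2^(ℓ - k₁ - k₂). -/
theorem stmt_8 (ℓ k₁ k₂ : ℕ) (hk : k₁ + k₂ ≤ ℓ) (α β : ℕ)
    (hα : α < 2 ^ ℓ) (hβ : β < 2 ^ ℓ) :
    ∃ bit : ℕ, bit ≤ 1 ∧
      Int.ModEq (2 ^ (ℓ - k₁ - k₂))
        (((α + β) % 2 ^ ℓ / 2 ^ k₁ : ℕ) : ℤ)
        (((α / 2 ^ k₁ : ℕ) : ℤ) + ((β / 2 ^ k₁ : ℕ) : ℤ) + (bit : ℤ)) := by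
  have hpos : 0 < (2 : ℕ) ^ k₁ := Nat.pow_pos (by norm_num)
  set bit : ℕ := (α % 2 ^ k₁ + β % 2 ^ k₁) / 2 ^ k₁ with hbit
  have hbit1 : bit ≤ 1 := by
    have h1 : α % 2 ^ k₁ < 2 ^ k₁ := Nat.mod_lt _ hpos
    have h2 : β % 2 ^ k₁ < 2 ^ k₁ := Nat.mod_lt _ hpos
    have : α % 2 ^ k₁ + β % 2 ^ k₁ < 2 * 2 ^ k₁ := by omega
    have := Nat.div_lt_of_lt_mul (by rwa [mul_comm] at this)
    omega
  have hadd : (α + β) / 2 ^ k₁ = α / 2 ^ k₁ + β / 2 ^ k₁ + bit := by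
    rw [hbit]
    conv_lhs => rw [← Nat.div_add_mod α (2 ^ k₁), ← Nat.div_add_mod β (2 ^ k₁)]
    rw [show 2 ^ k₁ * (α / 2 ^ k₁) + α % 2 ^ k₁ + (2 ^ k₁ * (β / 2 ^ k₁) + β % 2 ^ k₁)
        = (α % 2 ^ k₁ + β % 2 ^ k₁) + (α / 2 ^ k₁ + β / 2 ^ k₁) * 2 ^ k₁ by ring]
    rw [Nat.add_mul_div_right _ _ hpos]
    omega
  refine ⟨bit, hbit1, ?_⟩
  by_cases hc : α + β < 2 ^ ℓ
  · rw [Nat.mod_eq_of_lt hc, hadd]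
    push_cast
    rfl
  · have hsum : α + β = ((α + β) % 2 ^ ℓ) + 2 ^ ℓ := by
      have h2 : α + β < 2 ^ ℓ + 2 ^ ℓ := by omega
      have := Nat.mod_eq_sub_mod (le_of_not_gt hc)
      rw [this, Nat.mod_eq_of_lt (by omega)]
      omega
    set m := (α + β) % 2 ^ ℓ with hm
    have hpow : (2 : ℕ) ^ ℓ = 2 ^ (ℓ - k₁) * 2 ^ k₁ := by
      rw [← pow_add]
      congr 1
      omega
    have hdiv : (α + β) / 2 ^ k₁ = m / 2 ^ k₁ + 2 ^ (ℓ - k₁) := by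
      rw [hsum, hpow, Nat.add_mul_div_right _ _ hpos]
    have hmd : m / 2 ^ k₁ + 2 ^ (ℓ - k₁) = α / 2 ^ k₁ + β / 2 ^ k₁ + bit := by
      rw [← hdiv, hadd]
    have hdvd : ((2 : ℤ) ^ (ℓ - k₁ - k₂)) ∣ ((2 : ℤ) ^ (ℓ - k₁)) :=
      pow_dvd_pow 2 (by omega)
    have : ((m / 2 ^ k₁ : ℕ) : ℤ) + 2 ^ (ℓ - k₁)
        = ((α / 2 ^ k₁ : ℕ) : ℤ) + ((β / 2 ^ k₁ : ℕ) : ℤ) + (bit : ℤ) := by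
      exact_mod_cast congrArg (Nat.cast : ℕ → ℤ) hmd
    calc ((m / 2 ^ k₁ : ℕ) : ℤ)
        ≡ ((m / 2 ^ k₁ : ℕ) : ℤ) + 2 ^ (ℓ - k₁) [ZMOD (2 ^ (ℓ - k₁ - k₂))] :=
          Int.modEq_iff_dvd.mpr (by simpa using hdvd)
      _ = _ := this
end

section
/- For all natural numbers ℓ, k_1, k_2 with k_1 + k_2 ≤ ℓ and all naturals α, β with α < 2^ℓ and β < 2^ℓ, there exists bit ∈ {0,1} such that ⌊((α + 2^ℓ − β) mod 2^ℓ)/2^{k_1}⌋ ≡ ⌊α/2^{k_1}⌋ − ⌊β/2^{k_1}⌋ − bit (mod 2^{ℓ−k_1−k_2}), as a congruence of integers, where (α + 2^ℓ − β) mod 2^ℓ represents the difference α − β in Z_{2^ℓ}. -/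
/-!
Write `α = 2^k₁ a + r` and `β = 2^k₁ b + s`. The representative `γ` of `α - β` differs from the
integer `α - β` by a multiple of `2^ℓ = 2^k₁ · 2^(ℓ-k₁)`, so `⌊γ / 2^k₁⌋ ≡ ⌊(α - β) / 2^k₁⌋`
modulo `2^(ℓ-k₁)`, and a fortiori modulo `2^(ℓ-k₁-k₂)`. Finally
`⌊(α - β) / 2^k₁⌋ = a - b - bit`, where `bit = 1` exactly when the low parts borrow (`r < s`).
-/

namespace Int

theorem ediv_modEq_ediv_of_modEq_mul {x y K M : ℤ} (h : x ≡ y [ZMOD K * M]) :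
    x / K ≡ y / K [ZMOD M] := by
  obtain ⟨c, hc⟩ := modEq_iff_dvd.mp h
  rcases eq_or_ne K 0 with rfl | hK
  · simp [ModEq]
  have hy : y = x + M * c * K := by linear_combination hc
  exact modEq_iff_dvd.mpr ⟨c, by rw [hy, add_mul_ediv_right _ _ hK]; ring⟩

theorem exists_bit_sub_ediv (x y : ℤ) {K : ℤ} (hK : 0 < K) :
    ∃ bit : ℕ, bit ≤ 1 ∧ (x - y) / K = x / K - y / K - bit := by
  have hx := mul_ediv_add_emod x K
  have hy := mul_ediv_add_emod y K
  have hx₀ := emod_nonneg x hK.ne'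
  have hy₀ := emod_nonneg y hK.ne'
  have hxK := emod_lt_of_pos x hK
  have hyK := emod_lt_of_pos y hK
  by_cases hborrow : y % K ≤ x % K
  · refine ⟨0, zero_le_one, ((Int.ediv_emod_unique (r := x % K - y % K) hK).mpr
      ⟨?_, ?_, ?_⟩).1⟩ <;> push_cast <;> linarith
  · refine ⟨1, le_rfl, ((Int.ediv_emod_unique (r := x % K - y % K + K) hK).mpr
      ⟨?_, ?_, ?_⟩).1⟩ <;> push_cast <;> linarith

end Int

theorem Nat.cast_add_sub_mod_modEq {a b L : ℕ} (h : b ≤ a + L) :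
    (((a + L - b) % L : ℕ) : ℤ) ≡ a - b [ZMOD L] := by
  push_cast [h]
  exact (Int.mod_modEq _ _).trans (Int.modEq_iff_dvd.mpr ⟨-1, by ring⟩)

theorem stmt_9_general (ℓ k₁ k₂ : ℕ) (hk : k₁ + k₂ ≤ ℓ) (α β : ℕ)
    (hβ : β < 2 ^ ℓ) :
    ∃ bit : ℕ, bit ≤ 1 ∧
      Int.ModEq (2 ^ (ℓ - k₁ - k₂))
        (((α + 2 ^ ℓ - β) % 2 ^ ℓ / 2 ^ k₁ : ℕ) : ℤ)
        (((α / 2 ^ k₁ : ℕ) : ℤ) - ((β / 2 ^ k₁ : ℕ) : ℤ) - (bit : ℤ)) := by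
  obtain ⟨bit, hbit, hdiv⟩ := Int.exists_bit_sub_ediv α β (pow_pos two_pos k₁ : (0 : ℤ) < 2 ^ k₁)
  refine ⟨bit, hbit, ?_⟩
  have hγ : (((α + 2 ^ ℓ - β) % 2 ^ ℓ : ℕ) : ℤ) ≡ α - β [ZMOD 2 ^ k₁ * 2 ^ (ℓ - k₁)] := by
    rw [← pow_add, Nat.add_sub_cancel' (by omega)]
    exact_mod_cast Nat.cast_add_sub_mod_modEq (by omega)
  have hquot := (Int.ediv_modEq_ediv_of_modEq_mul hγ).of_dvd (pow_dvd_pow 2 (Nat.sub_le _ k₂))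
  push_cast
  rwa [← hdiv]

/-- two-parameter cut of a modular difference, as a congruence
modulo 2^(ℓ - k₁ - k₂). -/
theorem stmt_9 (ℓ k₁ k₂ : ℕ) (hk : k₁ + k₂ ≤ ℓ) (α β : ℕ)
    (hα : α < 2 ^ ℓ) (hβ : β < 2 ^ ℓ) :
    ∃ bit : ℕ, bit ≤ 1 ∧
      Int.ModEq (2 ^ (ℓ - k₁ - k₂))
        (((α + 2 ^ ℓ - β) % 2 ^ ℓ / 2 ^ k₁ : ℕ) : ℤ)
        (((α / 2 ^ k₁ : ℕ) : ℤ) - ((β / 2 ^ k₁ : ℕ) : ℤ) - (bit : ℤ)) :=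
  stmt_9_general ℓ k₁ k₂ hk α β hβ
end

section
/- Let ℓ, ℓ_x, k_1, k_2 be naturals with k_1 + k_2 ≤ ℓ and ℓ > ℓ_x + 1, let x be a natural with 0 ≤ x < 2^{ℓ_x} (a positive input), and let R be any natural with R < 2^ℓ. Let out be the unique natural in [0, 2^{ℓ−k_1−k_2}) congruent to ⌊((x+R) mod 2^ℓ)/2^{k_1}⌋ − ⌊R/2^{k_1}⌋ modulo 2^{ℓ−k_1−k_2}. Then there exists bit ∈ {0,1} such that out = (⌊x/2^{k_1}⌋ + bit) mod 2^{ℓ−k_1−k_2}. -/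
/-- correctness of the non-interactive deterministic truncation
protocol for positive inputs. -/
theorem stmt_10 (ℓ ℓx k₁ k₂ : ℕ) (hk : k₁ + k₂ ≤ ℓ) (hℓ : ℓ > ℓx + 1)
    (x : ℕ) (hx : x < 2 ^ ℓx) (R : ℕ) (hR : R < 2 ^ ℓ)
    (out : ℕ) (hout1 : out < 2 ^ (ℓ - k₁ - k₂))
    (hout2 : Int.ModEq (2 ^ (ℓ - k₁ - k₂)) (out : ℤ)
      ((((x + R) % 2 ^ ℓ / 2 ^ k₁ : ℕ) : ℤ) - ((R / 2 ^ k₁ : ℕ) : ℤ))) :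
    ∃ bit : ℕ, bit ≤ 1 ∧ out = (x / 2 ^ k₁ + bit) % 2 ^ (ℓ - k₁ - k₂) := by
  set d := 2 ^ k₁ with hd
  set m := 2 ^ (ℓ - k₁ - k₂) with hm
  have hd0 : 0 < d := Nat.pow_pos (by norm_num)
  set q := (x + R) / 2 ^ ℓ with hq
  have hxl : x < 2 ^ ℓ := lt_of_lt_of_le hx (Nat.pow_le_pow_right (by norm_num) (by omega))
  have hq1 : q ≤ 1 := by
    rw [hq, Nat.div_le_iff_le_mul_add_pred (Nat.pow_pos (a := 2) (n := ℓ) (by norm_num))]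
    omega
  -- 2^ℓ = d * 2^(ℓ - k₁)
  have hsplit : 2 ^ ℓ = d * 2 ^ (ℓ - k₁) := by
    rw [hd, ← pow_add]
    congr 1
    omega
  have hmod : (x + R) % 2 ^ ℓ = x + R - 2 ^ ℓ * q := by
    rw [hq]
    have := Nat.mod_add_div (x + R) (2 ^ ℓ)
    omega
  have hle : 2 ^ ℓ * q ≤ x + R := Nat.mul_div_le (x + R) (2 ^ ℓ) |>.trans_eq' rfl
  set bit : ℕ := if d ≤ x % d + R % d then 1 else 0 with hbit
  have hbit1 : bit ≤ 1 := by rw [hbit]; split <;> norm_num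
  have hadd : (x + R) / d = x / d + R / d + bit := Nat.add_div hd0
  have hNd : (x + R) % 2 ^ ℓ / d = (x + R) / d - 2 ^ (ℓ - k₁) * q := by
    have h1 : (x + R) % 2 ^ ℓ = x + R - d * (2 ^ (ℓ - k₁) * q) := by
      rw [hmod, hsplit, mul_assoc]
    rw [h1, Nat.sub_mul_div]
  have hle2 : 2 ^ (ℓ - k₁) * q ≤ (x + R) / d := by
    have : 2 ^ ℓ * q / d ≤ (x + R) / d := Nat.div_le_div_right hle
    rwa [hsplit, mul_assoc, Nat.mul_div_cancel_left _ hd0] at this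
  -- key nat identity
  have key : (x + R) % 2 ^ ℓ / d + 2 ^ (ℓ - k₁) * q = x / d + R / d + bit := by
    rw [hNd, ← hadd]
    omega
  -- m divides 2^(ℓ - k₁)
  have hmd : (m : ℤ) ∣ (2 : ℤ) ^ (ℓ - k₁) := by
    have : m ∣ 2 ^ (ℓ - k₁) := pow_dvd_pow 2 (by omega)
    exact_mod_cast Int.natCast_dvd_natCast.mpr this
  have hcong : Int.ModEq (m : ℤ) (out : ℤ) ((x / d + bit : ℕ) : ℤ) := by
    have h1 : ((((x + R) % 2 ^ ℓ / d : ℕ) : ℤ)) =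
        ((x / d + R / d + bit : ℕ) : ℤ) - 2 ^ (ℓ - k₁) * q := by
      have := congrArg (fun n : ℕ => (n : ℤ)) key
      push_cast at this ⊢
      linarith
    calc (out : ℤ) ≡ (((x + R) % 2 ^ ℓ / d : ℕ) : ℤ) - ((R / d : ℕ) : ℤ) [ZMOD (m : ℕ)] := by
          exact_mod_cast hout2
      _ = ((x / d + bit : ℕ) : ℤ) - 2 ^ (ℓ - k₁) * q := by push_cast [h1]; ring
      _ ≡ ((x / d + bit : ℕ) : ℤ) - 0 [ZMOD (m : ℕ)] :=
          Int.ModEq.sub (Int.ModEq.refl _)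
            ((Int.modEq_zero_iff_dvd).mpr (hmd.mul_right (q : ℤ)))
      _ = ((x / d + bit : ℕ) : ℤ) := by ring
  have hfin : out % m = (x / d + bit) % m := by
    have := hcong
    unfold Int.ModEq at this
    have h2 : ((out % m : ℕ) : ℤ) = (((x / d + bit) % m : ℕ) : ℤ) := by
      push_cast
      exact this
    exact_mod_cast h2
  exact ⟨bit, hbit1, by rw [← hfin, Nat.mod_eq_of_lt hout1]⟩
end

section
/- Let ℓ, ℓ_x, k_1, k_2 be naturals with k_1 + k_2 ≤ ℓ and ℓ > ℓ_x + 1, let x be a natural with 2^ℓ − 2^{ℓ_x} < x < 2^ℓ (a negative input) with absolute value ξ := 2^ℓ − x, and let R be any natural with R < 2^ℓ. Let out be the unique natural in [0, 2^{ℓ−k_1−k_2}) congruent to ⌊((x+R) mod 2^ℓ)/2^{k_1}⌋ − ⌊R/2^{k_1}⌋ modulo 2^{ℓ−k_1−k_2}. Then there exists bit ∈ {0,1} such that out ≡ −⌊ξ/2^{k_1}⌋ − bit (mod 2^{ℓ−k_1−k_2}), as a congruence of integers. -/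
/-!
Over the integers, `(x + R) mod 2^ℓ = (R - ξ) mod 2^ℓ`, and reducing modulo `2^ℓ` before dividing
by `2^k₁` changes the quotient only by a multiple of `2^(ℓ - k₁)`, which vanishes modulo
`2^(ℓ - k₁ - k₂)`. So the output is `⌊(R - ξ) / 2^k₁⌋ - ⌊R / 2^k₁⌋`, and the floor of a difference
of quotients falls short of the difference of the floors by at most one.
-/

theorem Int.exists_sub_ediv_eq (a b : ℤ) {K : ℤ} (hK : 0 < K) :
    ∃ bit : ℕ, bit ≤ 1 ∧ (a - b) / K = a / K - b / K - bit := by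
  set borrow := (a % K - b % K) / K
  have hsplit : (a - b) / K = a / K - b / K + borrow := by
    rw [show a - b = a % K - b % K + K * (a / K - b / K) by
      linear_combination Int.emod_add_mul_ediv b K - Int.emod_add_mul_ediv a K,
      Int.add_mul_ediv_left _ _ hK.ne']
    ring
  have hupper : borrow * K < 1 * K := by
    have := Int.ediv_mul_le (a % K - b % K) hK.ne'
    linarith [Int.emod_lt_of_pos a hK, Int.emod_nonneg b hK.ne']
  have hlower : -2 * K < borrow * K := by
    have := Int.lt_ediv_add_one_mul_self (a % K - b % K) hK
    linarith [Int.emod_nonneg a hK.ne', Int.emod_lt_of_pos b hK]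
  have hd1 := lt_of_mul_lt_mul_right hupper hK.le
  have hd2 := lt_of_mul_lt_mul_right hlower hK.le
  exact ⟨(-borrow).toNat, by omega, by omega⟩

theorem Int.emod_two_pow_ediv_two_pow_modEq (c : ℤ) (a b : ℕ) :
    c % 2 ^ b / 2 ^ a ≡ c / 2 ^ a [ZMOD 2 ^ (b - a)] := by
  rcases le_or_gt a b with hab | hab
  · have hpow : (2 : ℤ) ^ b = 2 ^ a * 2 ^ (b - a) := by rw [← pow_add, Nat.add_sub_cancel' hab]
    rw [Int.emod_def, hpow, mul_assoc, Int.sub_mul_ediv_left _ _ (by positivity)]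
    exact Int.modEq_iff_dvd.mpr ⟨c / (2 ^ a * 2 ^ (b - a)), by ring⟩
  · rw [Nat.sub_eq_zero_of_le hab.le, pow_zero]
    exact Int.modEq_one

theorem stmt_11_general (ℓ k₁ k₂ : ℕ) (x : ℕ) (hx2 : x < 2 ^ ℓ) (R : ℕ) (out : ℕ)
    (hout2 : Int.ModEq (2 ^ (ℓ - k₁ - k₂)) (out : ℤ)
      ((((x + R) % 2 ^ ℓ / 2 ^ k₁ : ℕ) : ℤ) - ((R / 2 ^ k₁ : ℕ) : ℤ))) :
    ∃ bit : ℕ, bit ≤ 1 ∧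
      Int.ModEq (2 ^ (ℓ - k₁ - k₂)) (out : ℤ)
        (-(((2 ^ ℓ - x) / 2 ^ k₁ : ℕ) : ℤ) - (bit : ℤ)) := by
  set ξ := 2 ^ ℓ - x
  have hwrap : (((x + R) % 2 ^ ℓ : ℕ) : ℤ) = ((R : ℤ) - ξ) % 2 ^ ℓ := by
    have hx : (x : ℤ) = 2 ^ ℓ - ξ := by
      rw [Nat.cast_sub hx2.le]; push_cast; ring
    push_cast
    rw [hx, show (2 : ℤ) ^ ℓ - ξ + R = R - ξ + 2 ^ ℓ by ring, Int.add_emod_right]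
  obtain ⟨bit, hbit, hdiv⟩ := Int.exists_sub_ediv_eq R ξ (K := 2 ^ k₁) (by positivity)
  refine ⟨bit, hbit, hout2.trans ?_⟩
  have hshift := ((Int.emod_two_pow_ediv_two_pow_modEq ((R : ℤ) - ξ) k₁ ℓ).of_dvd
    (pow_dvd_pow 2 (Nat.sub_le (ℓ - k₁) k₂))).sub_right (R / 2 ^ k₁ : ℤ)
  push_cast [hwrap]
  rw [hdiv] at hshift
  convert hshift using 1
  ring

/-- correctness of the non-interactive deterministic truncation
protocol for negative inputs. -/
theorem stmt_11 (ℓ ℓx k₁ k₂ : ℕ) (hk : k₁ + k₂ ≤ ℓ) (hℓ : ℓ > ℓx + 1)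
    (x : ℕ) (hx1 : 2 ^ ℓ - 2 ^ ℓx < x) (hx2 : x < 2 ^ ℓ) (R : ℕ) (hR : R < 2 ^ ℓ)
    (out : ℕ) (hout1 : out < 2 ^ (ℓ - k₁ - k₂))
    (hout2 : Int.ModEq (2 ^ (ℓ - k₁ - k₂)) (out : ℤ)
      ((((x + R) % 2 ^ ℓ / 2 ^ k₁ : ℕ) : ℤ) - ((R / 2 ^ k₁ : ℕ) : ℤ))) :
    ∃ bit : ℕ, bit ≤ 1 ∧
      Int.ModEq (2 ^ (ℓ - k₁ - k₂)) (out : ℤ)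
        (-(((2 ^ ℓ - x) / 2 ^ k₁ : ℕ) : ℤ) - (bit : ℤ)) :=
  stmt_11_general ℓ k₁ k₂ x hx2 R out hout2
end

section
/- Let ℓ' be a natural with ℓ' ≥ 1 and let p be a prime with 2^{ℓ'} < p < 2^{ℓ'+1}. For all naturals a, b with a < 2^{ℓ'} and b < 2^{ℓ'}, define a' := 2^{ℓ'} mod p if a = 0 and a' := a mod p otherwise, and define b' := (p + b − 2^{ℓ'}) mod p. Then (a' + b') mod p = 0 if and only if (a + b) mod 2^{ℓ'} = 0. (Correctness of the non-interactive modulo-switch protocol: the output shares in Z_p sum to zero exactly when the input shares in Z_{2^{ℓ'}} sum to zero.) -/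
lemma mod_eq_zero_iff_aux (x p : ℕ) (h1 : 0 < x) (h2 : x < 2 * p) :
    x % p = 0 ↔ x = p := by
  constructor
  · intro h
    rcases Nat.lt_or_ge x p with hx | hx
    · rw [Nat.mod_eq_of_lt hx] at h; omega
    · rw [Nat.mod_eq_sub_mod hx, Nat.mod_eq_of_lt (by omega)] at h; omega
  · intro h; simp [h]

/-- correctness of the non-interactive modulo-switch protocol. -/
theorem stmt_12 (ℓ' : ℕ) (hℓ : 1 ≤ ℓ') (p : ℕ) (hp : p.Prime)
    (hp1 : 2 ^ ℓ' < p) (hp2 : p < 2 ^ (ℓ' + 1))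
    (a b : ℕ) (ha : a < 2 ^ ℓ') (hb : b < 2 ^ ℓ') :
    (((if a = 0 then 2 ^ ℓ' % p else a % p) + (p + b - 2 ^ ℓ') % p) % p = 0)
      ↔ ((a + b) % 2 ^ ℓ' = 0) := by
  set N := 2 ^ ℓ' with hN
  have hN2 : 2 ^ (ℓ' + 1) = 2 * N := by rw [hN, pow_succ]; ring
  have hNpos : 0 < N := Nat.pow_pos (by norm_num)
  have hb' : (p + b - N) % p = p + b - N := Nat.mod_eq_of_lt (by omega)
  have hrhs : (a + b) % N = 0 ↔ a + b = 0 ∨ a + b = N := by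
    rcases Nat.lt_or_ge (a + b) N with h | h
    · rw [Nat.mod_eq_of_lt h]; omega
    · rw [Nat.mod_eq_sub_mod h, Nat.mod_eq_of_lt (by omega)]; omega
  by_cases haz : a = 0
  · subst haz
    simp only [if_pos rfl, if_true, hb']
    rw [Nat.mod_eq_of_lt (by omega : N < p)]
    have : N + (p + b - N) = p + b := by omega
    rw [this, Nat.add_mod_left, Nat.mod_eq_of_lt (by omega : b < p)]
    omega
  · simp only [if_neg haz, hb']
    rw [Nat.mod_eq_of_lt (by omega : a < p)]
    have : a + (p + b - N) = a + b + p - N := by omega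
    rw [this, mod_eq_zero_iff_aux _ _ (by omega) (by omega)]
    omega
end

section
/- Let ℓ, ℓ_x be naturals with ℓ_x + 1 < ℓ, let ξ be a natural with 0 < ξ < 2^{ℓ_x} (a positive input), and let R be any natural with R < 2^ℓ. For each natural j, let t_j be the unique natural in [0, 2^{ℓ−j}) congruent to ⌊((ξ+R) mod 2^ℓ)/2^j⌋ − ⌊R/2^j⌋ modulo 2^{ℓ−j}. Then there exist naturals λ', λ'' with λ' ≤ λ'' ≤ ℓ_x such that for every j ≤ ℓ_x: if λ' ≤ j ≤ λ'' then t_j = 1, and if j > λ'' then t_j = 0. -/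
/-- pattern of the deterministic truncation sequence for a
positive input: a (possibly empty) run of 1's followed by 0's. -/
theorem stmt_13 (ℓ ℓx : ℕ) (hℓ : ℓx + 1 < ℓ) (ξ : ℕ) (hξ0 : 0 < ξ) (hξ : ξ < 2 ^ ℓx)
    (R : ℕ) (hR : R < 2 ^ ℓ) (t : ℕ → ℕ)
    (ht1 : ∀ j, t j < 2 ^ (ℓ - j))
    (ht2 : ∀ j, Int.ModEq (2 ^ (ℓ - j)) (t j : ℤ)
      ((((ξ + R) % 2 ^ ℓ / 2 ^ j : ℕ) : ℤ) - ((R / 2 ^ j : ℕ) : ℤ))) :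
    ∃ lam' lam'' : ℕ, lam' ≤ lam'' ∧ lam'' ≤ ℓx ∧
      ∀ j ≤ ℓx, (lam' ≤ j → j ≤ lam'' → t j = 1) ∧ (lam'' < j → t j = 0) := by
  have hpow : ∀ j : ℕ, 0 < (2:ℕ) ^ j := fun j => pow_pos two_pos j
  -- carry is at most 1
  have hc1 : ∀ j, (ξ % 2 ^ j + R % 2 ^ j) / 2 ^ j ≤ 1 := by
    intro j
    have h1 := Nat.mod_lt ξ (hpow j)
    have h2 := Nat.mod_lt R (hpow j)
    have : ξ % 2 ^ j + R % 2 ^ j < 2 * 2 ^ j := by omega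
    exact Nat.lt_succ_iff.mp ((Nat.div_lt_iff_lt_mul (hpow j)).mpr (by omega))
  -- key formula for t j
  have key : ∀ j, j ≤ ℓx → t j = ξ / 2 ^ j + (ξ % 2 ^ j + R % 2 ^ j) / 2 ^ j := by
    intro j hj
    have hjℓ : j ≤ ℓ := by omega
    have hsplit : (2:ℕ) ^ ℓ = 2 ^ j * 2 ^ (ℓ - j) := by
      rw [← pow_add]; congr 1; omega
    have e1 : (ξ + R) / 2 ^ j
        = (ξ + R) % 2 ^ ℓ / 2 ^ j + 2 ^ (ℓ - j) * ((ξ + R) / 2 ^ ℓ) := by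
      conv_lhs => rw [← Nat.mod_add_div (ξ + R) (2 ^ ℓ)]
      rw [hsplit, mul_assoc, Nat.add_mul_div_left _ _ (hpow j)]
    have e2 : (ξ + R) / 2 ^ j
        = ξ / 2 ^ j + R / 2 ^ j + (ξ % 2 ^ j + R % 2 ^ j) / 2 ^ j := by
      conv_lhs => rw [← Nat.mod_add_div ξ (2 ^ j), ← Nat.mod_add_div R (2 ^ j)]
      rw [show ξ % 2 ^ j + 2 ^ j * (ξ / 2 ^ j) + (R % 2 ^ j + 2 ^ j * (R / 2 ^ j))
          = 2 ^ j * (ξ / 2 ^ j + R / 2 ^ j) + (ξ % 2 ^ j + R % 2 ^ j) by ring,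
        Nat.mul_add_div (hpow j)]
    -- convert the integer congruence to a natural one
    have h1 : ((t j + R / 2 ^ j : ℕ) : ℤ)
        ≡ (((ξ + R) % 2 ^ ℓ / 2 ^ j : ℕ) : ℤ) [ZMOD ((2 ^ (ℓ - j) : ℕ) : ℤ)] := by
      have h := (ht2 j).add_right ((R / 2 ^ j : ℕ) : ℤ)
      rw [sub_add_cancel] at h
      exact_mod_cast h
    have h2 : t j + R / 2 ^ j ≡ (ξ + R) % 2 ^ ℓ / 2 ^ j [MOD 2 ^ (ℓ - j)] :=
      Int.natCast_modEq_iff.mp h1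
    have h3 : (ξ + R) % 2 ^ ℓ / 2 ^ j ≡ (ξ + R) / 2 ^ j [MOD 2 ^ (ℓ - j)] := by
      rw [e1]
      exact (Nat.modEq_iff_dvd' (Nat.le_add_right _ _)).mpr ⟨(ξ + R) / 2 ^ ℓ, by omega⟩
    have h4 : t j + R / 2 ^ j
        ≡ ξ / 2 ^ j + (ξ % 2 ^ j + R % 2 ^ j) / 2 ^ j + R / 2 ^ j
          [MOD 2 ^ (ℓ - j)] := by
      refine (h2.trans h3).trans ?_
      rw [e2, show ξ / 2 ^ j + R / 2 ^ j + (ξ % 2 ^ j + R % 2 ^ j) / 2 ^ j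
          = ξ / 2 ^ j + (ξ % 2 ^ j + R % 2 ^ j) / 2 ^ j + R / 2 ^ j by ring]
    have h5 : t j ≡ ξ / 2 ^ j + (ξ % 2 ^ j + R % 2 ^ j) / 2 ^ j [MOD 2 ^ (ℓ - j)] :=
      Nat.ModEq.add_right_cancel' _ h4
    -- both sides are small
    have hb1 : ξ / 2 ^ j < 2 ^ (ℓx - j) := by
      apply (Nat.div_lt_iff_lt_mul (hpow j)).mpr
      calc ξ < 2 ^ ℓx := hξ
        _ = 2 ^ (ℓx - j) * 2 ^ j := by rw [← pow_add]; congr 1; omega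
    have hb2 : 2 ^ (ℓx - j) + 1 ≤ 2 ^ (ℓ - j) := by
      have h2le : 2 ^ (ℓx - j + 1) ≤ 2 ^ (ℓ - j) := pow_le_pow_right₀ (by norm_num) (by omega)
      have : (2:ℕ) ^ (ℓx - j + 1) = 2 ^ (ℓx - j) * 2 := by ring
      have hb := hpow (ℓx - j)
      omega
    have hcb := hc1 j
    exact h5.eq_of_lt_of_lt (ht1 j) (by omega)
  -- run boundary
  have ht0 : t 0 ≠ 0 := by
    have h := key 0 (Nat.zero_le _)
    simp [Nat.mod_one] at h
    omega
  set m := Nat.findGreatest (fun j => t j ≠ 0) ℓx with hm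
  have hmle : m ≤ ℓx := Nat.findGreatest_le ℓx
  have hPm : t m ≠ 0 := Nat.findGreatest_spec (P := fun j => t j ≠ 0) (Nat.zero_le ℓx) ht0
  have hzero : ∀ j ≤ ℓx, m < j → t j = 0 := by
    intro j hj hmj
    by_contra h
    exact Nat.findGreatest_is_greatest hmj hj h
  have htm1 : t m = 1 := by
    have hk0 := key m hmle
    rcases Nat.lt_or_ge m ℓx with hlt | hge
    · rcases Nat.lt_or_ge ξ (2 ^ m) with hsm | hbig
      · have h0 : ξ / 2 ^ m = 0 := Nat.div_eq_of_lt hsm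
        have := hc1 m
        omega
      · have h1 : t (m + 1) = 0 := hzero (m + 1) hlt (Nat.lt_succ_self m)
        have hk1 := key (m + 1) hlt
        have hd := Nat.add_eq_zero.mp (hk1.symm.trans h1)
        have hd1 : ξ / 2 ^ (m + 1) = 0 := hd.1
        have hd2 : (ξ % 2 ^ (m + 1) + R % 2 ^ (m + 1)) / 2 ^ (m + 1) = 0 := hd.2
        have hξlt : ξ < 2 ^ (m + 1) :=
          (Nat.div_eq_zero_iff.mp hd1).resolve_left (hpow (m + 1)).ne'
        have hmod1 : ξ % 2 ^ (m + 1) = ξ := Nat.mod_eq_of_lt hξlt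
        have hcarry0 : ξ + R % 2 ^ (m + 1) < 2 ^ (m + 1) := by
          have := (Nat.div_eq_zero_iff.mp hd2).resolve_left (hpow (m + 1)).ne'
          omega
        have hps : (2:ℕ) ^ (m + 1) = 2 * 2 ^ m := by ring
        have hR1 : R % 2 ^ (m + 1) < 2 ^ m := by omega
        have hRm : R % 2 ^ m = R % 2 ^ (m + 1) := by
          rw [← Nat.mod_mod_of_dvd R (pow_dvd_pow 2 (Nat.le_succ m))]
          exact Nat.mod_eq_of_lt hR1
        have hξm : ξ % 2 ^ m = ξ - 2 ^ m := by
          rw [Nat.mod_eq_sub_mod hbig, Nat.mod_eq_of_lt (by omega)]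
        have hcm : (ξ % 2 ^ m + R % 2 ^ m) / 2 ^ m = 0 :=
          Nat.div_eq_of_lt (by omega)
        have hdm : ξ / 2 ^ m = 1 := Nat.div_eq_of_lt_le (by omega) (by omega)
        omega
    · have hme : m = ℓx := le_antisymm hmle hge
      have h0 : ξ / 2 ^ m = 0 := Nat.div_eq_of_lt (by rw [hme]; exact hξ)
      have := hc1 m
      omega
  refine ⟨m, m, le_refl m, hmle, fun j hj => ⟨fun h1 h2 => ?_, fun h => hzero j hj h⟩⟩
  have : j = m := le_antisymm h2 h1
  rw [this]; exact htm1
end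

section
/- Let ℓ, ℓ_x be naturals with ℓ_x + 1 < ℓ, let ξ be a natural with 0 < ξ < 2^{ℓ_x}, let x := 2^ℓ − ξ (a negative input with absolute value ξ), and let R be any natural with R < 2^ℓ. For each natural j, let t'_j be the unique natural in [0, 2^{ℓ−j}) congruent to ⌊((2^ℓ − ξ + R) mod 2^ℓ)/2^j⌋ − ⌊R/2^j⌋ modulo 2^{ℓ−j}. Then there exist naturals λ', λ'' with λ' ≤ λ'' ≤ ℓ_x such that for every j ≤ ℓ_x: if λ' ≤ j ≤ λ'' then t'_j = 2^{ℓ−j} − 1, and if j > λ'' then t'_j = 0. -/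
/-!
Write `d j := ⌊R / 2^j⌋ - ⌊(R - ξ) / 2^j⌋`. Since `2^ℓ - ξ + R ≡ R - ξ (mod 2^ℓ)`, the reconstructed
truncation is `t'_j ≡ -d j (mod 2^(ℓ-j))`, so `t'_j = 0` when `d j = 0` and `t'_j = 2^(ℓ-j) - 1` when
`d j = 1`. Passing from `j` to `j + 1` halves `d` up to an error of one: `|d j - 2 d (j+1)| ≤ 1`.
Hence `d` starts at `d 0 = ξ ≥ 1`, is antitone, cannot drop from `≥ 2` straight to `0`, and satisfies
`2^j (d j - 1) ≤ ξ - 1`, so `d ℓx ≤ 1`. Its values on `[0, ℓx]` are therefore a block of values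
`≥ 2`, then a nonempty block of `1`s, then a block of `0`s.
-/

/-- Counts the multiples of `2^j` in the half-open interval `(R - ξ, R]`. -/
def borrow (R ξ : ℤ) (j : ℕ) : ℤ := R / 2 ^ j - (R - ξ) / 2 ^ j

theorem Int.ediv_modEq_ediv_of_modEq_mul_s14 {a b m n : ℤ} (hm : m ≠ 0) (h : a ≡ b [ZMOD m * n]) :
    a / m ≡ b / m [ZMOD n] := by
  obtain ⟨k, hk⟩ := Int.modEq_iff_dvd.mp h
  have hb : b = a + m * (n * k) := by rw [← mul_assoc, ← hk]; ring
  exact Int.modEq_iff_dvd.mpr ⟨k, by rw [hb, Int.add_mul_ediv_left _ _ hm]; ring⟩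

theorem Int.eq_of_modEq_of_nonneg_of_lt {t a m : ℤ} (h : t ≡ a [ZMOD m]) (ht0 : 0 ≤ t) (htm : t < m)
    (ha0 : 0 ≤ a) (ham : a < m) : t = a := by
  rwa [Int.ModEq, Int.emod_eq_of_lt ht0 htm, Int.emod_eq_of_lt ha0 ham] at h

namespace borrow

variable {R ξ : ℤ}

theorem zero : borrow R ξ 0 = ξ := by simp [borrow]

theorem nonneg (hξ : 0 ≤ ξ) (j : ℕ) : 0 ≤ borrow R ξ j :=
  sub_nonneg.mpr (Int.ediv_le_ediv (by positivity) (by linarith))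

theorem succ_eq (j : ℕ) : borrow R ξ (j + 1) = R / 2 ^ j / 2 - (R - ξ) / 2 ^ j / 2 := by
  simp only [borrow, pow_succ, Int.ediv_ediv_of_nonneg (by positivity : (0 : ℤ) ≤ 2 ^ j)]

theorem le_two_mul_succ_add_one (j : ℕ) : borrow R ξ j ≤ 2 * borrow R ξ (j + 1) + 1 := by
  rw [succ_eq, borrow]; omega

theorem two_mul_succ_le_add_one (j : ℕ) : 2 * borrow R ξ (j + 1) ≤ borrow R ξ j + 1 := by
  rw [succ_eq, borrow]; omega

theorem antitone (hξ : 0 ≤ ξ) : Antitone (borrow R ξ) :=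
  antitone_nat_of_succ_le fun j => by
    have := two_mul_succ_le_add_one (R := R) (ξ := ξ) j
    have := nonneg (R := R) hξ j
    omega

theorem two_pow_mul_sub_one_le (j : ℕ) : 2 ^ j * (borrow R ξ j - 1) ≤ ξ - 1 := by
  induction j with
  | zero => simp [zero]
  | succ j ih =>
    calc 2 ^ (j + 1) * (borrow R ξ (j + 1) - 1)
        = 2 ^ j * (2 * borrow R ξ (j + 1) - 2) := by ring
      _ ≤ 2 ^ j * (borrow R ξ j - 1) :=
        mul_le_mul_of_nonneg_left (by linarith [two_mul_succ_le_add_one (R := R) (ξ := ξ) j])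
          (by positivity)
      _ ≤ ξ - 1 := ih

theorem le_one_of_le_two_pow {j : ℕ} (hj : ξ ≤ 2 ^ j) : borrow R ξ j ≤ 1 := by
  by_contra! h1
  have := le_mul_of_one_le_right (by positivity : (0 : ℤ) ≤ 2 ^ j)
    (by linarith : 1 ≤ borrow R ξ j - 1)
  linarith [two_pow_mul_sub_one_le (R := R) (ξ := ξ) j]

end borrow

theorem truncation_modEq_neg_borrow {ℓ j ξ : ℕ} (R : ℕ) (hξ : ξ ≤ 2 ^ ℓ) (hj : j ≤ ℓ) :
    ((((2 ^ ℓ - ξ + R) % 2 ^ ℓ / 2 ^ j : ℕ) : ℤ) - ((R / 2 ^ j : ℕ) : ℤ))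
      ≡ -borrow R ξ j [ZMOD 2 ^ (ℓ - j)] := by
  have hshares : ((2 ^ ℓ - ξ + R : ℕ) : ℤ) % 2 ^ ℓ ≡ R - ξ [ZMOD 2 ^ j * 2 ^ (ℓ - j)] := by
    rw [← pow_add, Nat.add_sub_cancel' hj]
    refine (Int.mod_modEq _ _).trans (Int.modEq_iff_dvd.mpr ⟨-1, ?_⟩)
    push_cast [Nat.cast_sub hξ]
    ring
  have htrunc := (Int.ediv_modEq_ediv_of_modEq_mul_s14 (by positivity) hshares).sub_right (R / 2 ^ j)
  rw [borrow, neg_sub]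
  push_cast
  exact htrunc

theorem exists_run_eq_one_then_eq_zero {f : ℕ → ℤ} {n : ℕ} (hf : Antitone f) (hf0 : ∀ j, 0 ≤ f j)
    (h0 : 1 ≤ f 0) (hn : f n ≤ 1) (hstep : ∀ j, f j ≤ 2 * f (j + 1) + 1) :
    ∃ a b, a ≤ b ∧ b ≤ n ∧ ∀ j ≤ n, (a ≤ j → j ≤ b → f j = 1) ∧ (b < j → f j = 0) := by
  classical
  set b := Nat.findGreatest (fun j => 1 ≤ f j) n
  have hbn : b ≤ n := Nat.findGreatest_le n
  have hb : 1 ≤ f b := Nat.findGreatest_spec (P := fun j => 1 ≤ f j) (Nat.zero_le n) h0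
  have hgt : ∀ j, b < j → j ≤ n → f j < 1 := fun j hbj hjn =>
    not_le.mp (Nat.findGreatest_is_greatest hbj hjn)
  have hb1 : f b ≤ 1 := by
    rcases hbn.lt_or_eq with hlt | heq
    · have := hgt (b + 1) (Nat.lt_succ_self b) hlt
      have := hstep b
      omega
    · rwa [heq]
  have hex : ∃ j, f j ≤ 1 := ⟨b, hb1⟩
  refine ⟨Nat.find hex, b, Nat.find_min' hex hb1, hbn,
    fun j hjn => ⟨fun haj hjb => ?_, fun hbj => ?_⟩⟩
  · have := hf haj
    have := hf hjb
    have := Nat.find_spec hex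
    omega
  · have := hgt j hbj hjn
    have := hf0 j
    omega

theorem stmt_14_general (ℓ ℓx : ℕ) (hℓ : ℓx + 1 < ℓ) (ξ : ℕ) (hξ0 : 0 < ξ) (hξ : ξ < 2 ^ ℓx)
    (R : ℕ) (t' : ℕ → ℕ)
    (ht1 : ∀ j, t' j < 2 ^ (ℓ - j))
    (ht2 : ∀ j, Int.ModEq (2 ^ (ℓ - j)) (t' j : ℤ)
      ((((2 ^ ℓ - ξ + R) % 2 ^ ℓ / 2 ^ j : ℕ) : ℤ) - ((R / 2 ^ j : ℕ) : ℤ))) :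
    ∃ lam' lam'' : ℕ, lam' ≤ lam'' ∧ lam'' ≤ ℓx ∧
      ∀ j ≤ ℓx, (lam' ≤ j → j ≤ lam'' → t' j = 2 ^ (ℓ - j) - 1) ∧
        (lam'' < j → t' j = 0) := by
  have hξℓ : ξ ≤ 2 ^ ℓ := hξ.le.trans (Nat.pow_le_pow_right two_pos (by omega))
  obtain ⟨lam', lam'', hlam, hlam'', hrun⟩ := exists_run_eq_one_then_eq_zero
    (borrow.antitone (R := R) ξ.cast_nonneg) (borrow.nonneg ξ.cast_nonneg)
    (by rw [borrow.zero]; exact_mod_cast hξ0)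
    (borrow.le_one_of_le_two_pow (by exact_mod_cast hξ.le)) borrow.le_two_mul_succ_add_one
  refine ⟨lam', lam'', hlam, hlam'', fun j hj => ?_⟩
  have hcong := (ht2 j).trans (truncation_modEq_neg_borrow R hξℓ (by omega))
  have ht0 : (0 : ℤ) ≤ t' j := by positivity
  have htj : (t' j : ℤ) < 2 ^ (ℓ - j) := by exact_mod_cast ht1 j
  refine ⟨fun h1 h2 => ?_, fun h => ?_⟩
  · rw [(hrun j hj).1 h1 h2] at hcong
    have hneg : (-1 : ℤ) ≡ 2 ^ (ℓ - j) - 1 [ZMOD 2 ^ (ℓ - j)] := Int.modEq_iff_dvd.mpr ⟨1, by ring⟩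
    have := Int.eq_of_modEq_of_nonneg_of_lt (hcong.trans hneg) ht0 htj
      (Int.sub_nonneg_of_le (one_le_pow₀ (by norm_num))) (sub_one_lt _)
    rw [← Nat.cast_inj (R := ℤ), Nat.cast_sub Nat.one_le_two_pow]
    exact_mod_cast this
  · rw [(hrun j hj).2 h, neg_zero] at hcong
    exact_mod_cast Int.eq_of_modEq_of_nonneg_of_lt hcong ht0 htj le_rfl (by positivity)

/-- pattern of the deterministic truncation sequence for a
negative input: a (possibly empty) run of (2^(ℓ-j) - 1)'s followed by 0's. -/
theorem stmt_14 (ℓ ℓx : ℕ) (hℓ : ℓx + 1 < ℓ) (ξ : ℕ) (hξ0 : 0 < ξ) (hξ : ξ < 2 ^ ℓx)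
    (R : ℕ) (hR : R < 2 ^ ℓ) (t' : ℕ → ℕ)
    (ht1 : ∀ j, t' j < 2 ^ (ℓ - j))
    (ht2 : ∀ j, Int.ModEq (2 ^ (ℓ - j)) (t' j : ℤ)
      ((((2 ^ ℓ - ξ + R) % 2 ^ ℓ / 2 ^ j : ℕ) : ℤ) - ((R / 2 ^ j : ℕ) : ℤ))) :
    ∃ lam' lam'' : ℕ, lam' ≤ lam'' ∧ lam'' ≤ ℓx ∧
      ∀ j ≤ ℓx, (lam' ≤ j → j ≤ lam'' → t' j = 2 ^ (ℓ - j) - 1) ∧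
        (lam'' < j → t' j = 0) :=
  stmt_14_general ℓ ℓx hℓ ξ hξ0 hξ R t' ht1 ht2
end

section
/- Let ℓ, ℓ_x, k_1, k_2 be naturals with k_1 + k_2 ≤ ℓ and ℓ > ℓ_x + 1, let ξ be a natural with 0 ≤ ξ < 2^{ℓ_x} (a positive input), let R < 2^ℓ, and set m := 2^{ℓ−k_1−k_2}. Let out be the unique natural in [0, m) congruent to ⌊((ξ+R) mod 2^ℓ)/2^{k_1}⌋ − ⌊R/2^{k_1}⌋ modulo m. Then: if (ξ mod 2^{k_1}) + (R mod 2^{k_1}) < 2^{k_1}, then out = ⌊ξ/2^{k_1}⌋ mod m; and if (ξ mod 2^{k_1}) + (R mod 2^{k_1}) ≥ 2^{k_1}, then out = (⌊ξ/2^{k_1}⌋ + 1) mod m. -/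
/-- exact characterization of the one-bit carry error e₀ in the
deterministic truncation of a positive input. -/
theorem stmt_15 (ℓ ℓx k₁ k₂ : ℕ) (hk : k₁ + k₂ ≤ ℓ) (hℓ : ℓ > ℓx + 1)
    (ξ : ℕ) (hξ : ξ < 2 ^ ℓx) (R : ℕ) (hR : R < 2 ^ ℓ)
    (out : ℕ) (hout1 : out < 2 ^ (ℓ - k₁ - k₂))
    (hout2 : Int.ModEq (2 ^ (ℓ - k₁ - k₂)) (out : ℤ)
      ((((ξ + R) % 2 ^ ℓ / 2 ^ k₁ : ℕ) : ℤ) - ((R / 2 ^ k₁ : ℕ) : ℤ))) :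
    (ξ % 2 ^ k₁ + R % 2 ^ k₁ < 2 ^ k₁ →
      out = ξ / 2 ^ k₁ % 2 ^ (ℓ - k₁ - k₂)) ∧
    (2 ^ k₁ ≤ ξ % 2 ^ k₁ + R % 2 ^ k₁ →
      out = (ξ / 2 ^ k₁ + 1) % 2 ^ (ℓ - k₁ - k₂)) := by
  have hk1 : k₁ ≤ ℓ := le_trans (Nat.le_add_right _ _) hk
  have hp : (0:ℕ) < 2 ^ k₁ := Nat.pow_pos (by norm_num)
  set m : ℕ := 2 ^ (ℓ - k₁ - k₂) with hm
  set r : ℕ := (ξ + R) % 2 ^ ℓ with hr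
  set q : ℕ := (ξ + R) / 2 ^ ℓ with hq
  set a : ℕ := ξ / 2 ^ k₁ with ha
  set b : ℕ := R / 2 ^ k₁ with hb
  set x : ℕ := ξ % 2 ^ k₁ with hx
  set y : ℕ := R % 2 ^ k₁ with hy
  set c : ℕ := (x + y) / 2 ^ k₁ with hc
  have hsplit : 2 ^ ℓ * q + r = ξ + R := Nat.div_add_mod _ _
  have hpow : 2 ^ ℓ = 2 ^ k₁ * 2 ^ (ℓ - k₁) := by
    rw [← pow_add]; congr 1; omega
  have hdiv1 : (ξ + R) / 2 ^ k₁ = 2 ^ (ℓ - k₁) * q + r / 2 ^ k₁ := by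
    rw [← hsplit, hpow, mul_assoc, Nat.mul_add_div hp]
  have hξR : ξ + R = 2 ^ k₁ * (a + b) + (x + y) := by
    have h1 : 2 ^ k₁ * a + x = ξ := Nat.div_add_mod _ _
    have h2 : 2 ^ k₁ * b + y = R := Nat.div_add_mod _ _
    rw [← h1, ← h2]; ring
  have hdiv2 : (ξ + R) / 2 ^ k₁ = a + b + c := by
    rw [hξR, Nat.mul_add_div hp]
  have hkey : 2 ^ (ℓ - k₁) * q + r / 2 ^ k₁ = a + b + c := by
    rw [← hdiv1, hdiv2]
  -- cast key equation to ℤ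
  have hkeyZ : ((r / 2 ^ k₁ : ℕ) : ℤ) - ((b : ℕ) : ℤ)
      = (a : ℤ) + c - 2 ^ (ℓ - k₁) * q := by
    have := congrArg (Nat.cast : ℕ → ℤ) hkey
    push_cast at this ⊢
    linarith
  have hdvd : (m : ℤ) ∣ 2 ^ (ℓ - k₁) * q := by
    exact Dvd.dvd.mul_right (by exact_mod_cast pow_dvd_pow 2 (by omega : ℓ - k₁ - k₂ ≤ ℓ - k₁)) _
  have hmc : ((2:ℤ) ^ (ℓ - k₁ - k₂)) = (m : ℤ) := by push_cast [hm]; ring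
  have hmodZ : (out : ℤ) ≡ ((a + c : ℕ) : ℤ) [ZMOD (m : ℤ)] := by
    rw [hmc] at hout2
    have h0 : ((2:ℤ) ^ (ℓ - k₁) * q) ≡ 0 [ZMOD (m : ℤ)] :=
      (Int.modEq_zero_iff_dvd).mpr hdvd
    have h1 : (a : ℤ) + c - 2 ^ (ℓ - k₁) * q ≡ (a : ℤ) + c - 0 [ZMOD (m:ℤ)] :=
      (Int.ModEq.refl _).sub h0
    rw [hkeyZ] at hout2
    have := hout2.trans h1
    simpa using this
  have hmodN : out ≡ a + c [MOD m] :=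
    Int.natCast_modEq_iff.mp hmodZ
  have hout : out = (a + c) % m := by
    have := hmodN
    unfold Nat.ModEq at this
    rw [Nat.mod_eq_of_lt hout1] at this
    exact this
  have hxlt : x < 2 ^ k₁ := Nat.mod_lt _ hp
  have hylt : y < 2 ^ k₁ := Nat.mod_lt _ hp
  constructor
  · intro h
    have hc0 : c = 0 := Nat.div_eq_of_lt h
    rw [hout, hc0, Nat.add_zero]
  · intro h
    have hc1 : c = 1 := by
      rw [hc]
      exact Nat.div_eq_of_lt_le (by omega) (by omega)
    rw [hout, hc1]
end

section
/- Let ℓ, ℓ_x, k_1, k_2 be naturals with k_1 + k_2 ≤ ℓ and ℓ > ℓ_x + 1, let ξ be a natural with 0 < ξ < 2^{ℓ_x}, let x := 2^ℓ − ξ (a negative input), let R < 2^ℓ, and set m := 2^{ℓ−k_1−k_2}. Let out be the unique natural in [0, m) congruent to ⌊((2^ℓ − ξ + R) mod 2^ℓ)/2^{k_1}⌋ − ⌊R/2^{k_1}⌋ modulo m. Then: if (R mod 2^{k_1}) ≥ (ξ mod 2^{k_1}), then out ≡ −⌊ξ/2^{k_1}⌋ (mod m); and if (R mod 2^{k_1})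 < (ξ mod 2^{k_1}), then out ≡ −⌊ξ/2^{k_1}⌋ − 1 (mod m), as congruences of integers. -/
lemma sub_ediv_aux (K a b : ℤ) (hK : 0 < K) :
    (a - b) / K = a / K - b / K - (if b % K ≤ a % K then 0 else 1) := by
  have ha : K * (a / K) + a % K = a := Int.mul_ediv_add_emod a K
  have hb : K * (b / K) + b % K = b := Int.mul_ediv_add_emod b K
  have ha0 : 0 ≤ a % K := Int.emod_nonneg a hK.ne'
  have hb0 : 0 ≤ b % K := Int.emod_nonneg b hK.ne'
  have ha1 : a % K < K := Int.emod_lt_of_pos a hK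
  have hb1 : b % K < K := Int.emod_lt_of_pos b hK
  split_ifs with h
  · refine ((Int.ediv_emod_unique (r := a % K - b % K) hK).mpr ⟨?_, by omega, by omega⟩).1
    rw [Int.sub_zero, Int.mul_sub]; omega
  · refine ((Int.ediv_emod_unique (r := a % K - b % K + K) hK).mpr ⟨?_, by omega, by omega⟩).1
    rw [Int.mul_sub, Int.mul_sub, Int.mul_one]; omega

/-- exact characterization of the one-bit borrow error e₀ in the
deterministic truncation of a negative input. -/
theorem stmt_16 (ℓ ℓx k₁ k₂ : ℕ) (hk : k₁ + k₂ ≤ ℓ) (hℓ : ℓ > ℓx + 1)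
    (ξ : ℕ) (hξ0 : 0 < ξ) (hξ : ξ < 2 ^ ℓx) (R : ℕ) (hR : R < 2 ^ ℓ)
    (out : ℕ) (hout1 : out < 2 ^ (ℓ - k₁ - k₂))
    (hout2 : Int.ModEq (2 ^ (ℓ - k₁ - k₂)) (out : ℤ)
      ((((2 ^ ℓ - ξ + R) % 2 ^ ℓ / 2 ^ k₁ : ℕ) : ℤ) - ((R / 2 ^ k₁ : ℕ) : ℤ))) :
    (ξ % 2 ^ k₁ ≤ R % 2 ^ k₁ →
      Int.ModEq (2 ^ (ℓ - k₁ - k₂)) (out : ℤ) (-((ξ / 2 ^ k₁ : ℕ) : ℤ))) ∧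
    (R % 2 ^ k₁ < ξ % 2 ^ k₁ →
      Int.ModEq (2 ^ (ℓ - k₁ - k₂)) (out : ℤ) (-((ξ / 2 ^ k₁ : ℕ) : ℤ) - 1)) := by
  have hk1 : k₁ ≤ ℓ := by omega
  have hξℓ : ξ < 2 ^ ℓ := lt_of_lt_of_le hξ (Nat.pow_le_pow_right (by norm_num) (by omega))
  have hξℓ' : ξ ≤ 2 ^ ℓ := hξℓ.le
  have hξi : (ξ : ℤ) < 2 ^ ℓ := by exact_mod_cast hξℓ
  have hRi : (R : ℤ) < 2 ^ ℓ := by exact_mod_cast hR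
  have hR0 : (0 : ℤ) ≤ R := by positivity
  set e : ℤ := if (ξ : ℤ) % 2 ^ k₁ ≤ (R : ℤ) % 2 ^ k₁ then 0 else 1 with he
  set c : ℤ := if (ξ : ℤ) ≤ (R : ℤ) then 0 else 1 with hc
  have hKpos : (0 : ℤ) < 2 ^ k₁ := by positivity
  have step2 : ((R : ℤ) - ξ) % 2 ^ ℓ = (R : ℤ) - ξ + c * 2 ^ ℓ := by
    rw [hc]; split_ifs with h
    · rw [Int.zero_mul, Int.add_zero]
      exact Int.emod_eq_of_lt (by omega) (by omega)
    · rw [Int.one_mul]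
      have h0 : (0 : ℤ) ≤ (R : ℤ) - ξ + 2 ^ ℓ := by omega
      have h1 : (R : ℤ) - ξ + 2 ^ ℓ < 2 ^ ℓ := by omega
      calc ((R : ℤ) - ξ) % 2 ^ ℓ = ((R : ℤ) - ξ + 2 ^ ℓ * 1) % 2 ^ ℓ :=
            (Int.add_mul_emod_self_left _ _ _).symm
        _ = (R : ℤ) - ξ + 2 ^ ℓ := by rw [mul_one]; exact Int.emod_eq_of_lt h0 h1
  have hpow : (2 : ℤ) ^ ℓ = 2 ^ (ℓ - k₁) * 2 ^ k₁ := by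
    rw [← pow_add]; congr 1; omega
  have step3 : ((R : ℤ) - ξ + c * 2 ^ ℓ) / 2 ^ k₁ = ((R : ℤ) - ξ) / 2 ^ k₁ + c * 2 ^ (ℓ - k₁) := by
    rw [hpow, ← Int.mul_assoc, Int.add_mul_ediv_right _ _ hKpos.ne']
  have step4 : ((R : ℤ) - ξ) / 2 ^ k₁ = (R : ℤ) / 2 ^ k₁ - (ξ : ℤ) / 2 ^ k₁ - e := by
    rw [sub_ediv_aux _ _ _ hKpos, he]
  have hT : (((2 ^ ℓ - ξ + R) % 2 ^ ℓ / 2 ^ k₁ : ℕ) : ℤ) - ((R / 2 ^ k₁ : ℕ) : ℤ)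
      = -((ξ / 2 ^ k₁ : ℕ) : ℤ) - e + c * 2 ^ (ℓ - k₁) := by
    push_cast [hξℓ']
    rw [show (2 : ℤ) ^ ℓ - ξ + R = ((R : ℤ) - ξ) + 2 ^ ℓ * 1 by ring,
      Int.add_mul_emod_self_left, step2, step3, step4]
    ring
  have hdvd : (2 : ℤ) ^ (ℓ - k₁ - k₂) ∣ c * 2 ^ (ℓ - k₁) :=
    Dvd.dvd.mul_left (pow_dvd_pow 2 (by omega)) c
  have hmod : Int.ModEq (2 ^ (ℓ - k₁ - k₂)) (out : ℤ) (-((ξ / 2 ^ k₁ : ℕ) : ℤ) - e) := by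
    refine hout2.trans ?_
    rw [hT]
    exact (Int.ModEq.symm ((Int.modEq_iff_dvd).mpr (by simpa using hdvd))).symm.symm
  constructor
  · intro hcond
    have he0 : e = 0 := by
      rw [he, if_pos]
      have := (Nat.cast_le (α := ℤ)).mpr hcond
      push_cast at this
      exact this
    simpa [he0] using hmod
  · intro hcond
    have he1 : e = 1 := by
      rw [he, if_neg]
      have := (Nat.cast_lt (α := ℤ)).mpr hcond
      push_cast at this
      omega
    simpa [he1] using hmod
end

section
/- Let ℓ, λ be naturals with λ + 1 < ℓ, let ξ be a natural with 2^{λ−1} ≤ ξ < 2^λ (so λ is the effective bit length of ξ), and let R be any natural with R < 2^ℓ. For each j < ℓ, let t_j be the unique natural in [0, 2^{ℓ−j}) congruent to ⌊((ξ+R) mod 2^ℓ)/2^j⌋ − ⌊R/2^j⌋ modulo 2^{ℓ−j}, and let t'_j be the unique natural in [0, 2^{ℓ−j}) congruent to ⌊((2^ℓ − ξ + R) mod 2^ℓ)/2^j⌋ − ⌊R/2^j⌋ modulo 2^{ℓ−j}. Then: (i) t_{λ−1} = 1 or t_λ = 1; and (ii) t'_{λ−1} = 2^{ℓ−λ+1}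 − 1 or t'_λ = 2^{ℓ−λ} − 1. -/
private lemma uniq (m a b : ℕ) (ha : a < m) (hb : b < m)
    (h : Int.ModEq m (a : ℤ) (b : ℤ)) : a = b := by
  have h2 : a ≡ b [MOD m] := Int.natCast_modEq_iff.mp h
  have := Nat.ModEq.eq_of_lt_of_lt h2 ha hb
  exact this

/-- carry decomposition of division of a sum -/
private lemma add_div_carry (a b p : ℕ) (hp : 0 < p) :
    (a + b) / p = a / p + b / p + (a % p + b % p) / p := by
  conv_lhs => rw [← Nat.div_add_mod a p, ← Nat.div_add_mod b p]
  rw [show p * (a / p) + a % p + (p * (b / p) + b % p)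
      = p * (a / p + b / p) + (a % p + b % p) by ring]
  rw [Nat.mul_add_div hp]

/-- dropping the outer mod doesn't change the truncation mod 2^(ℓ-j) -/
private lemma mod_div_modeq (ℓ j x : ℕ) (hj : j ≤ ℓ) :
    (x % 2 ^ ℓ / 2 ^ j) ≡ (x / 2 ^ j) [MOD 2 ^ (ℓ - j)] := by
  conv_rhs => rw [← Nat.div_add_mod x (2 ^ ℓ)]
  rw [show (2:ℕ) ^ ℓ = 2 ^ j * 2 ^ (ℓ - j) by rw [← pow_add]; congr 1; omega]
  rw [show 2 ^ j * 2 ^ (ℓ - j) * (x / (2 ^ j * 2 ^ (ℓ - j)))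
      = 2 ^ j * (2 ^ (ℓ - j) * (x / (2 ^ j * 2 ^ (ℓ - j)))) by ring]
  rw [Nat.mul_add_div (by positivity)]
  exact (Nat.modEq_iff_dvd' (by omega)).mpr
    ⟨x / (2 ^ j * 2 ^ (ℓ - j)), by omega⟩

/-- evaluation lemma: t is determined by v/2^j plus the carry -/
private lemma eval (ℓ j v R : ℕ) (hj : j ≤ ℓ) (t : ℕ) (h1 : t < 2 ^ (ℓ - j))
    (h2 : Int.ModEq (2 ^ (ℓ - j)) (t : ℤ)
      ((((v + R) % 2 ^ ℓ / 2 ^ j : ℕ) : ℤ) - ((R / 2 ^ j : ℕ) : ℤ)))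
    (w : ℕ) (hw : w < 2 ^ (ℓ - j))
    (hwv : w = v / 2 ^ j + (v % 2 ^ j + R % 2 ^ j) / 2 ^ j) : t = w := by
  apply uniq (2 ^ (ℓ - j)) t w h1 hw
  have hd : ((v + R) % 2 ^ ℓ / 2 ^ j : ℕ) ≡ ((v + R) / 2 ^ j : ℕ) [MOD 2 ^ (ℓ - j)] :=
    mod_div_modeq ℓ j (v + R) hj
  have hd' : Int.ModEq (2 ^ (ℓ - j)) (((v + R) % 2 ^ ℓ / 2 ^ j : ℕ) : ℤ)
      (((v + R) / 2 ^ j : ℕ) : ℤ) := by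
    exact_mod_cast Int.natCast_modEq_iff.mpr hd
  have hsplit : (v + R) / 2 ^ j = v / 2 ^ j + R / 2 ^ j + (v % 2 ^ j + R % 2 ^ j) / 2 ^ j :=
    add_div_carry v R (2 ^ j) (by positivity)
  have e1 : Int.ModEq (2 ^ (ℓ - j)) (t : ℤ)
      ((((v + R) / 2 ^ j : ℕ) : ℤ) - ((R / 2 ^ j : ℕ) : ℤ)) :=
    h2.trans (hd'.sub_right _)
  have e2 : (((v + R) / 2 ^ j : ℕ) : ℤ) - ((R / 2 ^ j : ℕ) : ℤ) = (w : ℤ) := by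
    rw [hsplit, hwv]; push_cast; ring
  rw [e2] at e1
  exact_mod_cast e1

/-- division/mod of 2^ℓ - s -/
private lemma sub_divmod (ℓ n q s : ℕ) (hn : n ≤ ℓ) (hq : q * 2 ^ n ≤ 2 ^ (ℓ - n) * 2 ^ n)
    (h1 : (q - 1) * 2 ^ n < s) (h2 : s ≤ q * 2 ^ n) (hq1 : 1 ≤ q) :
    (2 ^ ℓ - s) / 2 ^ n = 2 ^ (ℓ - n) - q ∧ (2 ^ ℓ - s) % 2 ^ n = q * 2 ^ n - s := by
  have hℓ : (2:ℕ) ^ ℓ = 2 ^ (ℓ - n) * 2 ^ n := by rw [← pow_add]; congr 1; omega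
  have e1 : (2 ^ (ℓ - n) - q) * 2 ^ n = 2 ^ (ℓ - n) * 2 ^ n - q * 2 ^ n := Nat.sub_mul _ _ _
  have e2 : (2 ^ (ℓ - n) - q + 1) * 2 ^ n = (2 ^ (ℓ - n) - q) * 2 ^ n + 2 ^ n := by
    rw [Nat.add_mul, one_mul]
  have e3 : (q - 1) * 2 ^ n = q * 2 ^ n - 1 * 2 ^ n := Nat.sub_mul _ _ _
  have hpn : (0:ℕ) < 2 ^ n := by positivity
  have hdiv : (2 ^ ℓ - s) / 2 ^ n = 2 ^ (ℓ - n) - q := by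
    apply Nat.div_eq_of_lt_le <;> omega
  refine ⟨hdiv, ?_⟩
  have := Nat.div_add_mod (2 ^ ℓ - s) (2 ^ n)
  rw [hdiv] at this
  have : 2 ^ n * (2 ^ (ℓ - n) - q) = 2 ^ (ℓ - n) * 2 ^ n - q * 2 ^ n := by
    rw [Nat.mul_sub]; ring_nf
  omega

/-- truncating by λ-1 or λ bits yields 1 (positive input) resp.
-1 (negative input), where λ is the effective bit length. -/
theorem stmt_17 (ℓ lam : ℕ) (h : lam + 1 < ℓ) (ξ : ℕ)
    (hξ1 : 2 ^ (lam - 1) ≤ ξ) (hξ2 : ξ < 2 ^ lam)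
    (R : ℕ) (hR : R < 2 ^ ℓ) (t t' : ℕ → ℕ)
    (ht1 : ∀ j < ℓ, t j < 2 ^ (ℓ - j))
    (ht2 : ∀ j < ℓ, Int.ModEq (2 ^ (ℓ - j)) (t j : ℤ)
      ((((ξ + R) % 2 ^ ℓ / 2 ^ j : ℕ) : ℤ) - ((R / 2 ^ j : ℕ) : ℤ)))
    (ht'1 : ∀ j < ℓ, t' j < 2 ^ (ℓ - j))
    (ht'2 : ∀ j < ℓ, Int.ModEq (2 ^ (ℓ - j)) (t' j : ℤ)
      ((((2 ^ ℓ - ξ + R) % 2 ^ ℓ / 2 ^ j : ℕ) : ℤ) - ((R / 2 ^ j : ℕ) : ℤ))) :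
    (t (lam - 1) = 1 ∨ t lam = 1) ∧
    (t' (lam - 1) = 2 ^ (ℓ - lam + 1) - 1 ∨ t' lam = 2 ^ (ℓ - lam) - 1) := by
  -- lam ≥ 1
  have hlam1 : 1 ≤ lam := by
    by_contra hc
    interval_cases lam <;> simp_all <;> omega
  have hlamℓ : lam < ℓ := by omega
  have hlam1ℓ : lam - 1 < ℓ := by omega
  have hpow : (2:ℕ) ^ lam = 2 * 2 ^ (lam - 1) := by
    rw [← pow_succ']; congr 1; omega
  have hexp1 : ℓ - (lam - 1) = ℓ - lam + 1 := by omega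
  have hpowL : (2:ℕ) ^ (ℓ - lam + 1) = 2 * 2 ^ (ℓ - lam) := by rw [pow_succ]; ring
  have h2le : (2:ℕ) ≤ 2 ^ (ℓ - lam) := by
    calc (2:ℕ) = 2 ^ 1 := rfl
    _ ≤ 2 ^ (ℓ - lam) := Nat.pow_le_pow_right (by norm_num) (by omega)
  -- facts about ξ
  have hmodξlam : ξ % 2 ^ lam = ξ := Nat.mod_eq_of_lt hξ2
  have hdivξlam : ξ / 2 ^ lam = 0 := Nat.div_eq_of_lt hξ2
  have hmodξ1 : ξ % 2 ^ (lam - 1) = ξ - 2 ^ (lam - 1) := by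
    rw [Nat.mod_eq_sub_mod hξ1]
    exact Nat.mod_eq_of_lt (by omega)
  have hdivξ1 : ξ / 2 ^ (lam - 1) = 1 := by
    apply Nat.div_eq_of_lt_le <;> omega
  have hRm1 : R % 2 ^ (lam - 1) < 2 ^ (lam - 1) := Nat.mod_lt _ (by positivity)
  have hRmlam : R % 2 ^ lam < 2 ^ lam := Nat.mod_lt _ (by positivity)
  have hRmm : R % 2 ^ (lam - 1) = (R % 2 ^ lam) % 2 ^ (lam - 1) := by
    rw [Nat.mod_mod_of_dvd]
    exact pow_dvd_pow 2 (by omega)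
  constructor
  · -- positive case
    by_cases hc : ξ % 2 ^ lam + R % 2 ^ lam < 2 ^ lam
    · -- carry at lam is 0, so carry at lam-1 is 0, t (lam-1) = 1
      left
      apply eval ℓ (lam - 1) ξ R (by omega) _ (ht1 _ hlam1ℓ) (ht2 _ hlam1ℓ)
      · rw [hexp1, hpowL]; omega
      · rw [hdivξ1, hmodξ1]
        have hsmall : ξ - 2 ^ (lam - 1) + R % 2 ^ (lam - 1) < 2 ^ (lam - 1) := by
          have : R % 2 ^ (lam - 1) ≤ R % 2 ^ lam := by rw [hRmm]; exact Nat.mod_le _ _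
          omega
        rw [Nat.div_eq_of_lt hsmall]
    · -- carry at lam is 1, t lam = 1
      right
      apply eval ℓ lam ξ R (by omega) _ (ht1 _ hlamℓ) (ht2 _ hlamℓ)
      · omega
      · rw [hdivξlam, hmodξlam]
        rw [hmodξlam] at hc
        have : (ξ + R % 2 ^ lam) / 2 ^ lam = 1 := by
          apply Nat.div_eq_of_lt_le <;> omega
        omega
  · -- negative case
    have hη1 : (2:ℕ) ^ lam ≤ 2 ^ ℓ := Nat.pow_le_pow_right (by norm_num) (by omega)
    have hηdm : (2 ^ ℓ - ξ) / 2 ^ lam = 2 ^ (ℓ - lam) - 1 ∧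
        (2 ^ ℓ - ξ) % 2 ^ lam = 1 * 2 ^ lam - ξ := by
      apply sub_divmod ℓ lam 1 ξ (by omega)
      · rw [one_mul, ← pow_add]
        apply Nat.pow_le_pow_right (by norm_num); omega
      · simpa using (by omega : 0 < ξ)
      · omega
      · omega
    obtain ⟨hηd, hηm⟩ := hηdm
    rw [one_mul] at hηm
    by_cases hc : R % 2 ^ lam < ξ
    · -- carry at lam is 0, t' lam = 2^(ℓ-lam) - 1
      right
      apply eval ℓ lam (2 ^ ℓ - ξ) R (by omega) _ (ht'1 _ hlamℓ) (ht'2 _ hlamℓ)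
      · omega
      · rw [hηd, hηm]
        rw [Nat.div_eq_of_lt (by omega)]
        omega
    · -- carry at lam is 1
      left
      by_cases hx : ξ = 2 ^ (lam - 1)
      · -- ξ = 2^(lam-1): η % 2^(lam-1) = 0, carry 0
        have hηdm1 : (2 ^ ℓ - ξ) / 2 ^ (lam - 1) = 2 ^ (ℓ - (lam - 1)) - 1 ∧
            (2 ^ ℓ - ξ) % 2 ^ (lam - 1) = 1 * 2 ^ (lam - 1) - ξ := by
          apply sub_divmod ℓ (lam - 1) 1 ξ (by omega)
          · rw [one_mul, ← pow_add]
            apply Nat.pow_le_pow_right (by norm_num); omega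
          · simpa using (by omega : 0 < ξ)
          · omega
          · omega
        obtain ⟨hd1, hm1⟩ := hηdm1
        apply eval ℓ (lam - 1) (2 ^ ℓ - ξ) R (by omega) _ (ht'1 _ hlam1ℓ) (ht'2 _ hlam1ℓ)
        · rw [hexp1]; have : (0:ℕ) < 2 ^ (ℓ - lam + 1) := by positivity
          omega
        · rw [hd1, hm1, hexp1, one_mul, hx, Nat.sub_self, Nat.zero_add,
            Nat.div_eq_of_lt hRm1]
          omega
      · -- ξ > 2^(lam-1): carry at lam-1 is 1
        have hξgt : 2 ^ (lam - 1) < ξ := lt_of_le_of_ne hξ1 (Ne.symm hx)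
        have hηdm2 : (2 ^ ℓ - ξ) / 2 ^ (lam - 1) = 2 ^ (ℓ - (lam - 1)) - 2 ∧
            (2 ^ ℓ - ξ) % 2 ^ (lam - 1) = 2 * 2 ^ (lam - 1) - ξ := by
          apply sub_divmod ℓ (lam - 1) 2 ξ (by omega)
          · have : 2 * 2 ^ (lam - 1) = 2 ^ lam := by omega
            rw [this, ← pow_add]
            apply Nat.pow_le_pow_right (by norm_num); omega
          · omega
          · omega
          · omega
        obtain ⟨hd2, hm2⟩ := hηdm2
        -- R % 2^(lam-1) = R % 2^lam - 2^(lam-1)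
        have hRbig : 2 ^ (lam - 1) ≤ R % 2 ^ lam := by omega
        have hRm' : R % 2 ^ (lam - 1) = R % 2 ^ lam - 2 ^ (lam - 1) := by
          rw [hRmm, Nat.mod_eq_sub_mod hRbig]
          exact Nat.mod_eq_of_lt (by omega)
        apply eval ℓ (lam - 1) (2 ^ ℓ - ξ) R (by omega) _ (ht'1 _ hlam1ℓ) (ht'2 _ hlam1ℓ)
        · rw [hexp1]; have : (0:ℕ) < 2 ^ (ℓ - lam + 1) := by positivity
          omega
        · rw [hd2, hm2, hexp1, hRm']
          have hcarry : (2 * 2 ^ (lam - 1) - ξ + (R % 2 ^ lam - 2 ^ (lam - 1))) / 2 ^ (lam - 1) = 1 := by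
            apply Nat.div_eq_of_lt_le <;> omega
          rw [hcarry]
          omega
end

section
/- Let ℓ, λ, λ' be naturals with λ + 1 < ℓ and λ < λ' < ℓ, let ξ be a natural with 2^{λ−1} ≤ ξ < 2^λ, and let R be any natural with R < 2^ℓ. For each j < ℓ, let t_j be the unique natural in [0, 2^{ℓ−j}) congruent to ⌊((ξ+R) mod 2^ℓ)/2^j⌋ − ⌊R/2^j⌋ modulo 2^{ℓ−j}, and let t'_j be the unique natural in [0, 2^{ℓ−j}) congruent to ⌊((2^ℓ − ξ + R) mod 2^ℓ)/2^j⌋ − ⌊R/2^j⌋ modulo 2^{ℓ−j}. Then: (i) if t_{λ'−1} = 1, then t_{λ'} = 0 or t_{λ'} = 1; and (ii) if t'_{λ'−1} = 2^{ℓ−λ'+1} − 1, then t'_{λ'} = 0 or t'_{λ'} = 2^{ℓ−λ'} − 1. -/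
lemma aux1 (P : ℤ) (hP : 2 ≤ P) (a b : ℕ) (T : ℤ)
    (hT : 0 ≤ T) (hT2 : T < P)
    (hmod : Int.ModEq P T (((a / 2 : ℕ) : ℤ) - ((b / 2 : ℕ) : ℤ)))
    (hprev : Int.ModEq (2 * P) ((a : ℤ) - (b : ℤ)) 1) :
    T = 0 ∨ T = 1 := by
  obtain ⟨K, hK⟩ := hprev.dvd
  set Q : ℤ := P * K with hQ
  have h2 : 2 * P * K = 2 * Q := by rw [hQ]; ring
  rw [h2] at hK
  have key : ((a / 2 : ℕ) : ℤ) - ((b / 2 : ℕ) : ℤ) = -Q ∨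
      ((a / 2 : ℕ) : ℤ) - ((b / 2 : ℕ) : ℤ) = 1 - Q := by omega
  rcases key with hc | hc
  · left
    have h0 : Int.ModEq P (((a / 2 : ℕ) : ℤ) - ((b / 2 : ℕ) : ℤ)) 0 := by
      rw [hc]
      exact (Int.modEq_zero_iff_dvd).mpr ((dvd_mul_right P K).neg_right)
    have := hmod.trans h0
    rwa [Int.ModEq, Int.emod_eq_of_lt hT hT2, Int.zero_emod] at this
  · right
    have h0 : Int.ModEq P (((a / 2 : ℕ) : ℤ) - ((b / 2 : ℕ) : ℤ)) 1 := by
      rw [hc]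
      refine Int.modEq_iff_dvd.mpr ?_
      have he : (1:ℤ) - (1 - Q) = P * K := by rw [hQ]; ring
      rw [he]
      exact dvd_mul_right P K
    have := hmod.trans h0
    rwa [Int.ModEq, Int.emod_eq_of_lt hT hT2,
      Int.emod_eq_of_lt (by norm_num) (by linarith)] at this

lemma aux2 (P : ℤ) (hP : 2 ≤ P) (a b : ℕ) (T : ℤ)
    (hT : 0 ≤ T) (hT2 : T < P)
    (hmod : Int.ModEq P T (((a / 2 : ℕ) : ℤ) - ((b / 2 : ℕ) : ℤ)))
    (hprev : Int.ModEq (2 * P) ((a : ℤ) - (b : ℤ)) (-1)) :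
    T = 0 ∨ T = P - 1 := by
  obtain ⟨K, hK⟩ := hprev.dvd
  set Q : ℤ := P * K with hQ
  have h2 : 2 * P * K = 2 * Q := by rw [hQ]; ring
  rw [h2] at hK
  have key : ((a / 2 : ℕ) : ℤ) - ((b / 2 : ℕ) : ℤ) = -Q ∨
      ((a / 2 : ℕ) : ℤ) - ((b / 2 : ℕ) : ℤ) = -1 - Q := by omega
  rcases key with hc | hc
  · left
    have h0 : Int.ModEq P (((a / 2 : ℕ) : ℤ) - ((b / 2 : ℕ) : ℤ)) 0 := by
      rw [hc]
      exact (Int.modEq_zero_iff_dvd).mpr ((dvd_mul_right P K).neg_right)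
    have := hmod.trans h0
    rwa [Int.ModEq, Int.emod_eq_of_lt hT hT2, Int.zero_emod] at this
  · right
    have h0 : Int.ModEq P (((a / 2 : ℕ) : ℤ) - ((b / 2 : ℕ) : ℤ)) (P - 1) := by
      rw [hc]
      refine Int.modEq_iff_dvd.mpr ?_
      have : (P - 1) - (-1 - Q) = P * (1 + K) := by rw [hQ]; ring
      rw [this]
      exact dvd_mul_right P (1 + K)
    have := hmod.trans h0
    rwa [Int.ModEq, Int.emod_eq_of_lt hT hT2,
      Int.emod_eq_of_lt (by linarith) (by linarith)] at this

/-- beyond the effective bit length, a truncation value of 1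
(resp. -1) is followed by 0 or 1 (resp. 0 or -1). -/
theorem stmt_18 (ℓ lam lam' : ℕ) (h : lam + 1 < ℓ) (h1 : lam < lam') (h2 : lam' < ℓ)
    (ξ : ℕ) (hξ1 : 2 ^ (lam - 1) ≤ ξ) (hξ2 : ξ < 2 ^ lam)
    (R : ℕ) (hR : R < 2 ^ ℓ) (t t' : ℕ → ℕ)
    (ht1 : ∀ j < ℓ, t j < 2 ^ (ℓ - j))
    (ht2 : ∀ j < ℓ, Int.ModEq (2 ^ (ℓ - j)) (t j : ℤ)
      ((((ξ + R) % 2 ^ ℓ / 2 ^ j : ℕ) : ℤ) - ((R / 2 ^ j : ℕ) : ℤ)))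
    (ht'1 : ∀ j < ℓ, t' j < 2 ^ (ℓ - j))
    (ht'2 : ∀ j < ℓ, Int.ModEq (2 ^ (ℓ - j)) (t' j : ℤ)
      ((((2 ^ ℓ - ξ + R) % 2 ^ ℓ / 2 ^ j : ℕ) : ℤ) - ((R / 2 ^ j : ℕ) : ℤ))) :
    (t (lam' - 1) = 1 → t lam' = 0 ∨ t lam' = 1) ∧
    (t' (lam' - 1) = 2 ^ (ℓ - lam' + 1) - 1 →
      t' lam' = 0 ∨ t' lam' = 2 ^ (ℓ - lam') - 1) := by
  have hl1 : lam' - 1 < ℓ := by omega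
  have hpow : (2:ℕ) ^ lam' = 2 ^ (lam' - 1) * 2 := by
    rw [← pow_succ]
    congr 1
    omega
  have hPeq : (2:ℤ) ^ (ℓ - (lam' - 1)) = 2 * 2 ^ (ℓ - lam') := by
    have : ℓ - (lam' - 1) = (ℓ - lam') + 1 := by omega
    rw [this, pow_succ]
    ring
  have hPn : ((2 ^ (ℓ - lam') : ℕ) : ℤ) = (2:ℤ) ^ (ℓ - lam') := by push_cast; ring
  have hP : (2:ℤ) ≤ 2 ^ (ℓ - lam') := by
    have h1n : (2:ℕ) ≤ 2 ^ (ℓ - lam') := by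
      have := Nat.one_lt_two_pow_iff.mpr (by omega : ℓ - lam' ≠ 0)
      omega
    omega
  -- rewrite the divisions at level lam' as divisions at lam'-1 over 2
  have hA : ((ξ + R) % 2 ^ ℓ / 2 ^ lam' : ℕ) = (ξ + R) % 2 ^ ℓ / 2 ^ (lam' - 1) / 2 := by
    rw [Nat.div_div_eq_div_mul, ← hpow]
  have hB : (R / 2 ^ lam' : ℕ) = R / 2 ^ (lam' - 1) / 2 := by
    rw [Nat.div_div_eq_div_mul, ← hpow]
  have hA' : ((2 ^ ℓ - ξ + R) % 2 ^ ℓ / 2 ^ lam' : ℕ)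
      = (2 ^ ℓ - ξ + R) % 2 ^ ℓ / 2 ^ (lam' - 1) / 2 := by
    rw [Nat.div_div_eq_div_mul, ← hpow]
  constructor
  · intro hteq
    have hmod := ht2 lam' h2
    rw [hA, hB] at hmod
    have hprev := (ht2 (lam' - 1) hl1).symm
    rw [hteq, hPeq] at hprev
    have hprev' : Int.ModEq (2 * 2 ^ (ℓ - lam'))
        ((((ξ + R) % 2 ^ ℓ / 2 ^ (lam' - 1) : ℕ) : ℤ) - ((R / 2 ^ (lam' - 1) : ℕ) : ℤ)) 1 := by
      simpa using hprev
    have := aux1 (2 ^ (ℓ - lam')) hP _ _ _ (Int.ofNat_nonneg _)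
      (by exact_mod_cast ht1 lam' h2) hmod hprev'
    omega
  · intro hteq
    have hmod := ht'2 lam' h2
    rw [hA', hB] at hmod
    have hprev := (ht'2 (lam' - 1) hl1).symm
    rw [hteq, hPeq] at hprev
    have hcast : (((2 ^ (ℓ - lam' + 1) - 1 : ℕ) : ℤ)) = 2 * 2 ^ (ℓ - lam') - 1 := by
      have hge : (1:ℕ) ≤ 2 ^ (ℓ - lam' + 1) := Nat.one_le_two_pow
      push_cast [hge]
      rw [pow_succ]
      ring
    rw [hcast] at hprev
    have hm1 : Int.ModEq (2 * 2 ^ (ℓ - lam')) (2 * 2 ^ (ℓ - lam') - 1) (-1) := by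
      refine Int.modEq_iff_dvd.mpr ?_
      have : (-1 : ℤ) - (2 * 2 ^ (ℓ - lam') - 1) = (2 * 2 ^ (ℓ - lam')) * (-1) := by ring
      rw [this]
      exact Dvd.intro _ rfl
    have hprev' := hprev.trans hm1
    have := aux2 (2 ^ (ℓ - lam')) hP _ _ _ (Int.ofNat_nonneg _)
      (by exact_mod_cast ht'1 lam' h2) hmod hprev'
    omega
end
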